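/- arXiv:1112.0754 — 8 statements merged into one kernel-verified Lean document; each statement's English description precedes it below -/
import Mathlib

section
/- Let H₁ and H₁' be complementary subspaces of F_p^d (so F_p^d = H₁ ⊕ H₁'), and let π denote the projection onto H₁' along H₁. Let A₁, A₂ be finite multisets in F_p^d and m₁, m₂ positive integers. Suppose m₁*A₁ (the set of sums of m₁-element submultisets of A₁) contains a translate of a subspace H₁ of F_p^d, and m₂*(π(A₂)) contains a translate of a subspace H₂ of H₁'. Then m₁*A₁ + m₂*A₂ contains a translate of the subspace H₁ + H₂. -/
open Pointwise

/-- The set of sums of submultisets of `A` of cardinality exactly `m`. -/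
def mStar {V : Type*} [AddCommMonoid V] (A : Multiset V) (m : ℕ) : Set V :=
  {x | ∃ B ≤ A, Multiset.card B = m ∧ B.sum = x}

/-!
Since `m₂*(π A₂) = π(m₂*A₂)`, every point `v₂ + b` (`b ∈ H₂`) of the given translate lifts to some
`s ∈ m₂*A₂`; let `s₀` lift `v₂`. A point of `v₁ + s₀ + (H₁ ⊔ H₂)` is `v₁ + s₀ + a + b` with
`a ∈ H₁ = ker π`. As `π` fixes `b`, the correction `k = s - s₀ - b` lies in `ker π`, so `v₁ + a - k`
lies in `m₁*A₁`, and adding `s` gives the point.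
-/

theorem mStar_eq_sum_image_powersetCard {V : Type*} [AddCommMonoid V] (A : Multiset V) (m : ℕ) :
    mStar A m = Multiset.sum '' {B | B ∈ A.powersetCard m} := by
  ext x
  simp [mStar, Multiset.mem_powersetCard, and_assoc]

theorem mStar_map {V W F : Type*} [AddCommMonoid V] [AddCommMonoid W] [FunLike F V W]
    [AddMonoidHomClass F V W] (f : F) (A : Multiset V) (m : ℕ) :
    mStar (A.map f) m = f '' mStar A m := by
  simp only [mStar_eq_sum_image_powersetCard, Multiset.powersetCard_map, Set.image_image]
  ext x
  simp [map_multiset_sum]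

theorem exists_vadd_ker_sup_subset_add {R V : Type*} [Ring R] [AddCommGroup V] [Module R V]
    (π : V →ₗ[R] V) (H : Submodule R V) (hπH : ∀ x ∈ H, π x = x) {S₁ S₂ : Set V} {v₁ v₂ : V}
    (hS₁ : v₁ +ᵥ (LinearMap.ker π : Set V) ⊆ S₁) (hS₂ : v₂ +ᵥ (H : Set V) ⊆ π '' S₂) :
    ∃ v : V, v +ᵥ ((LinearMap.ker π ⊔ H : Submodule R V) : Set V) ⊆ S₁ + S₂ := by
  have lift : ∀ b ∈ H, ∃ s ∈ S₂, π s = v₂ + b := fun b hb => hS₂ ⟨b, hb, rfl⟩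
  obtain ⟨s₀, -, hs₀⟩ := lift 0 H.zero_mem
  refine ⟨v₁ + s₀, ?_⟩
  rintro _ ⟨_, hab, rfl⟩
  obtain ⟨a, ha, b, hb, rfl⟩ := Submodule.mem_sup.mp hab
  obtain ⟨s, hs, hπs⟩ := lift b hb
  have hk : s - s₀ - b ∈ LinearMap.ker π := by
    rw [LinearMap.mem_ker, map_sub, map_sub, hπs, hs₀, hπH b hb, add_zero, add_sub_cancel_left,
      sub_self]
  refine ⟨v₁ + (a - (s - s₀ - b)), hS₁ ⟨_, Submodule.sub_mem _ ha hk, rfl⟩, s, hs, ?_⟩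
  simp only [vadd_eq_add]
  abel

theorem dimension_increment_general {p d : ℕ}
    (H₁ H₁' : Submodule (ZMod p) (Fin d → ZMod p))
    (π : (Fin d → ZMod p) →ₗ[ZMod p] (Fin d → ZMod p))
    (hker : LinearMap.ker π = H₁)
    (hproj : ∀ x ∈ H₁', π x = x)
    (A₁ A₂ : Multiset (Fin d → ZMod p)) (m₁ m₂ : ℕ)
    (H₂ : Submodule (ZMod p) (Fin d → ZMod p)) (hH₂ : H₂ ≤ H₁')
    (h1 : ∃ v : Fin d → ZMod p, v +ᵥ (H₁ : Set (Fin d → ZMod p)) ⊆ mStar A₁ m₁)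
    (h2 : ∃ v : Fin d → ZMod p, v +ᵥ (H₂ : Set (Fin d → ZMod p)) ⊆ mStar (A₂.map π) m₂) :
    ∃ v : Fin d → ZMod p,
      v +ᵥ ((H₁ ⊔ H₂ : Submodule (ZMod p) (Fin d → ZMod p)) : Set (Fin d → ZMod p)) ⊆
        mStar A₁ m₁ + mStar A₂ m₂ := by
  subst hker
  obtain ⟨v₁, hv₁⟩ := h1
  obtain ⟨v₂, hv₂⟩ := h2
  rw [mStar_map] at hv₂
  exact exists_vadd_ker_sup_subset_add π H₂ (fun x hx => hproj x (hH₂ hx)) hv₁ hv₂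

theorem dimension_increment {p d : ℕ} (hp : p.Prime)
    (H₁ H₁' : Submodule (ZMod p) (Fin d → ZMod p)) (hcompl : IsCompl H₁ H₁')
    (π : (Fin d → ZMod p) →ₗ[ZMod p] (Fin d → ZMod p))
    (hker : LinearMap.ker π = H₁) (hrange : LinearMap.range π = H₁')
    (hproj : ∀ x ∈ H₁', π x = x)
    (A₁ A₂ : Multiset (Fin d → ZMod p)) (m₁ m₂ : ℕ) (hm₁ : 0 < m₁) (hm₂ : 0 < m₂)
    (H₂ : Submodule (ZMod p) (Fin d → ZMod p)) (hH₂ : H₂ ≤ H₁')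
    (h1 : ∃ v : Fin d → ZMod p, v +ᵥ (H₁ : Set (Fin d → ZMod p)) ⊆ mStar A₁ m₁)
    (h2 : ∃ v : Fin d → ZMod p, v +ᵥ (H₂ : Set (Fin d → ZMod p)) ⊆ mStar (A₂.map π) m₂) :
    ∃ v : Fin d → ZMod p,
      v +ᵥ ((H₁ ⊔ H₂ : Submodule (ZMod p) (Fin d → ZMod p)) : Set (Fin d → ZMod p)) ⊆
        mStar A₁ m₁ + mStar A₂ m₂ :=
  dimension_increment_general H₁ H₁' π hker hproj A₁ A₂ m₁ m₂ H₂ hH₂ h1 h2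
end

section
/- Let p be a sufficiently large prime and A ⊆ F_p with |A| ≥ 2√p + 1. Then ⌊√p⌋*A = F_p, i.e., every element of F_p is a sum of exactly ⌊√p⌋ distinct elements of A. -/
/-!
After a translation of `A` we may aim at the sum `0`. Put `s = ⌊√p⌋` and pick exponents
`t₀ < ⋯ < t_{s-1} ≤ 2s + 1 < |A|` with `∑ tᵢ = (p - 1) + ∑ i`. The polynomial
`det (Xᵢ ^ j) * ((∑ Xᵢ) ^ (p - 1) - 1)` vanishes at every point of `Aˢ` except those with distinct
coordinates summing to `0` (Fermat). Its coefficient at `∏ Xᵢ ^ tᵢ`, multiplied by `∏ tᵢ!`, is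
`(p - 1)! * ∏_{i<j} (tⱼ - tᵢ)`, which is nonzero mod `p`, so Alon's Combinatorial Nullstellensatz
yields such a point.
-/

open Finset Equiv Matrix MvPolynomial
open scoped Nat

theorem Matrix.det_vandermonde_eq_sum_sign_smul {R : Type*} [CommRing R] {m : ℕ}
    (v : Fin m → R) :
    (vandermonde v).det = ∑ σ : Perm (Fin m), Perm.sign σ • ∏ i, v i ^ (σ i : ℕ) := by
  rw [← det_transpose, det_apply]
  rfl

theorem sum_sign_smul_prod_descFactorial {R : Type*} [CommRing R] {m : ℕ} (t : Fin m → ℕ) :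
    ∑ σ : Perm (Fin m), Perm.sign σ • ∏ i, ((t i).descFactorial (σ i) : R) =
      ∏ i, ∏ j ∈ Ioi i, ((t j : R) - t i) := by
  have hℤ : ∑ σ : Perm (Fin m), Perm.sign σ • ∏ i, ((t i).descFactorial (σ i) : ℤ) =
      ∏ i, ∏ j ∈ Ioi i, ((t j : ℤ) - t i) := by
    rw [← det_vandermonde, det_eval_matrixOfPolynomials_eq_det_vandermonde _ _
      (fun i => descPochhammer_natDegree ℤ i) (fun i => monic_descPochhammer ℤ i),
      ← det_transpose, det_apply]
    simp [descPochhammer_eval_eq_descFactorial]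
  simpa [Units.smul_def] using congrArg (Int.cast : ℤ → R) hℤ

theorem prod_factorial_mul_ite_multinomial {ι : Type*} [Fintype ι] (t e : ι → ℕ) (N : ℕ)
    (hsum : ∑ i, t i = N + ∑ i, e i) :
    (∏ i, (t i)!) * (if ∀ i, e i ≤ t i then Nat.multinomial univ (fun i => t i - e i) else 0) =
      N ! * ∏ i, (t i).descFactorial (e i) := by
  split_ifs with he
  · have hN : ∑ i, (t i - e i) = N := by
      have := sum_tsub_distrib univ fun i _ => he i
      omega
    simp_rw [← Nat.factorial_mul_descFactorial (he _), prod_mul_distrib, ← hN,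
      ← Nat.multinomial_spec]
    ring
  · push Not at he
    obtain ⟨i, hi⟩ := he
    rw [mul_zero, prod_eq_zero (mem_univ i) (Nat.descFactorial_eq_zero_iff_lt.mpr hi), mul_zero]

namespace MvPolynomial

variable {R : Type*} [CommRing R] {m : ℕ}

theorem det_vandermonde_X_eq_sum_sign_smul_monomial :
    (vandermonde (X : Fin m → MvPolynomial (Fin m) R)).det =
      ∑ σ : Perm (Fin m), Perm.sign σ •
        monomial (Finsupp.equivFunOnFinite.symm fun i => (σ i : ℕ)) 1 := by
  rw [det_vandermonde_eq_sum_sign_smul]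
  congr! with σ
  rw [prod_X_pow]
  congr
  ext i
  simp

theorem eval_det_vandermonde_X (x : Fin m → R) :
    eval x (vandermonde (X : Fin m → MvPolynomial (Fin m) R)).det = (vandermonde x).det := by
  rw [RingHom.map_det]
  congr 1
  ext i j
  simp [vandermonde]

theorem totalDegree_det_vandermonde_X_le :
    (vandermonde (X : Fin m → MvPolynomial (Fin m) R)).det.totalDegree ≤ ∑ i : Fin m, (i : ℕ) := by
  rw [det_vandermonde_X_eq_sum_sign_smul_monomial]
  refine (totalDegree_finsetSum _ _).trans (Finset.sup_le fun σ _ => ?_)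
  refine (totalDegree_smul_le _ _).trans ((totalDegree_monomial_le _ _).trans_eq ?_)
  rw [Finsupp.sum_fintype _ _ fun _ => rfl]
  simpa using Equiv.sum_comp σ fun i => (i : ℕ)

theorem coeff_det_vandermonde_X_mul_sum_X_pow (t : Fin m →₀ ℕ) (N : ℕ)
    (ht : t.degree = N + ∑ i : Fin m, (i : ℕ)) :
    coeff t ((vandermonde (X : Fin m → MvPolynomial (Fin m) R)).det * (∑ i, X i) ^ N) =
      ∑ σ : Perm (Fin m), Perm.sign σ •
        (if ∀ i, (σ i : ℕ) ≤ t i then (Nat.multinomial univ fun i => t i - σ i : R) else 0) := by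
  rw [det_vandermonde_X_eq_sum_sign_smul_monomial, sum_mul, coeff_sum]
  refine sum_congr rfl fun σ _ => ?_
  rw [smul_mul_assoc, coeff_smul, coeff_monomial_mul', coeff_sum_X_pow_of_fintype]
  set e : Fin m →₀ ℕ := Finsupp.equivFunOnFinite.symm fun i => (σ i : ℕ)
  have he : ∀ i, e i = σ i := fun i => rfl
  have hle : e ≤ t ↔ ∀ i, (σ i : ℕ) ≤ t i := by simp [Finsupp.le_def, he]
  congr 1
  by_cases hσ : ∀ i, (σ i : ℕ) ≤ t i
  · have hdeg : ((t - e).sum fun _ k => k) = N := by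
      rw [Finsupp.sum_fintype _ _ fun _ => rfl]
      simp only [Finsupp.coe_tsub, Pi.sub_apply, he]
      rw [sum_tsub_distrib _ fun i _ => hσ i, ← Finsupp.degree_eq_sum, ht,
        Equiv.sum_comp σ fun i => (i : ℕ)]
      omega
    rw [if_pos (hle.mpr hσ), if_pos hσ, if_pos hdeg, one_mul,
      Finsupp.multinomial_eq_of_support_subset (subset_univ _)]
    rfl
  · rw [if_neg (mt hle.mp hσ), if_neg hσ]

theorem prod_factorial_mul_coeff_det_vandermonde_X_mul_sum_X_pow (t : Fin m →₀ ℕ) (N : ℕ)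
    (ht : t.degree = N + ∑ i : Fin m, (i : ℕ)) :
    (∏ i, (t i)! : R) *
        coeff t ((vandermonde (X : Fin m → MvPolynomial (Fin m) R)).det * (∑ i, X i) ^ N) =
      N ! * ∏ i, ∏ j ∈ Ioi i, ((t j : R) - t i) := by
  rw [coeff_det_vandermonde_X_mul_sum_X_pow t N ht, ← sum_sign_smul_prod_descFactorial,
    mul_sum, mul_sum]
  refine sum_congr rfl fun σ _ => ?_
  rw [mul_smul_comm, mul_smul_comm]
  congr 1
  have hsum : ∑ i, t i = N + ∑ i, (σ i : ℕ) := by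
    rw [← Finsupp.degree_eq_sum, ht, Equiv.sum_comp σ fun i => (i : ℕ)]
  have := congrArg (Nat.cast : ℕ → R) (prod_factorial_mul_ite_multinomial t (fun i => σ i) N hsum)
  push_cast at this
  exact this

end MvPolynomial

theorem ZMod.exists_injective_sum_eq_zero {p : ℕ} [Fact p.Prime] {m : ℕ}
    (S : Fin m → Finset (ZMod p)) (t : Fin m → ℕ) (ht : Function.Injective t)
    (htS : ∀ i, t i < #(S i)) (hsum : ∑ i, t i = p - 1 + ∑ i : Fin m, (i : ℕ)) :
    ∃ x : Fin m → ZMod p, (∀ i, x i ∈ S i) ∧ Function.Injective x ∧ ∑ i, x i = 0 := by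
  set V := (vandermonde (X : Fin m → MvPolynomial (Fin m) (ZMod p))).det
  set g : MvPolynomial (Fin m) (ZMod p) := (∑ i, X i) ^ (p - 1) - 1 with hg
  set t' := Finsupp.equivFunOnFinite.symm t
  have hp : 1 ≤ p - 1 := Nat.le_sub_of_add_le (Fact.out : p.Prime).two_le
  have hdeg : t'.degree = p - 1 + ∑ i : Fin m, (i : ℕ) := by
    rw [Finsupp.degree_eq_sum, ← hsum]
    rfl
  have hdiff : ∏ i, ∏ j ∈ Ioi i, ((t j : ZMod p) - t i) ≠ 0 := by
    have htp : ∀ i, t i < p := fun i =>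
      (htS i).trans_le ((card_le_univ _).trans_eq (ZMod.card p))
    refine prod_ne_zero_iff.mpr fun i _ => prod_ne_zero_iff.mpr fun j hj => sub_ne_zero.mpr ?_
    intro h
    have := congrArg ZMod.val h
    rw [ZMod.val_cast_of_lt (htp j), ZMod.val_cast_of_lt (htp i)] at this
    exact (mem_Ioi.mp hj).ne' (ht this)
  have hcoeff : coeff t' (V * g) ≠ 0 := by
    rw [hg, mul_sub, mul_one, coeff_sub, coeff_eq_zero_of_totalDegree_lt
      (totalDegree_det_vandermonde_X_le.trans_lt (by rw [← Finsupp.degree_apply, hdeg]; omega)),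
      sub_zero]
    intro h0
    have := prod_factorial_mul_coeff_det_vandermonde_X_mul_sum_X_pow (R := ZMod p) t' (p - 1) hdeg
    rw [h0, mul_zero, ZMod.wilsons_lemma, eq_comm] at this
    exact mul_ne_zero (neg_ne_zero.mpr one_ne_zero) hdiff this
  have htot : (V * g).totalDegree = t'.degree := by
    refine le_antisymm ?_ (le_totalDegree (mem_support_iff.mpr hcoeff))
    have hlin : (∑ i, X i : MvPolynomial (Fin m) (ZMod p)).totalDegree ≤ 1 :=
      (totalDegree_finsetSum _ _).trans (Finset.sup_le fun i _ => (totalDegree_X i).le)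
    calc (V * g).totalDegree ≤ V.totalDegree + g.totalDegree := totalDegree_mul _ _
      _ ≤ ∑ i : Fin m, (i : ℕ) + (p - 1) := by
          gcongr
          · exact totalDegree_det_vandermonde_X_le
          · refine (totalDegree_sub _ _).trans (max_le ?_ (by simp))
            exact (totalDegree_pow _ _).trans (by nlinarith)
      _ = t'.degree := by omega
  obtain ⟨x, hxS, hx⟩ :=
    combinatorial_nullstellensatz_exists_eval_nonzero (V * g) t' hcoeff htot S htS
  rw [eval_mul, eval_det_vandermonde_X] at hx
  obtain ⟨hV, hgx⟩ := mul_ne_zero_iff.mp hx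
  refine ⟨x, hxS, det_vandermonde_ne_zero_iff.mp hV, ?_⟩
  by_contra h
  apply hgx
  simp [hg, ZMod.pow_card_sub_one_eq_one h]

theorem ZMod.exists_injective_sum_eq {p : ℕ} [Fact p.Prime] {m : ℕ} (hm : (m : ZMod p) ≠ 0)
    (S : Fin m → Finset (ZMod p)) (t : Fin m → ℕ) (ht : Function.Injective t)
    (htS : ∀ i, t i < #(S i)) (hsum : ∑ i, t i = p - 1 + ∑ i : Fin m, (i : ℕ)) (y : ZMod p) :
    ∃ x : Fin m → ZMod p, (∀ i, x i ∈ S i) ∧ Function.Injective x ∧ ∑ i, x i = y := by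
  set a := y / m
  obtain ⟨x, hxS, hx, hx0⟩ := exists_injective_sum_eq_zero
    (fun i => (S i).map (Equiv.addRight (-a)).toEmbedding) t ht (by simpa using htS) hsum
  refine ⟨fun i => x i + a, fun i => ?_, (add_left_injective a).comp hx, ?_⟩
  · obtain ⟨z, hz, hzx⟩ := mem_map.mp (hxS i)
    simpa [← hzx] using hz
  · rw [sum_add_distrib, hx0, sum_const, card_univ, Fintype.card_fin, nsmul_eq_mul, zero_add,
      mul_div_cancel₀ _ hm]

theorem Nat.sum_range_add_div (m n : ℕ) (hm : 0 < m) : ∑ i ∈ range m, (n + i) / m = n := by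
  induction n with
  | zero => exact sum_eq_zero fun i hi => Nat.div_eq_of_lt (by simpa using hi)
  | succ n ih =>
    have h1 := sum_range_succ (fun i => (n + i) / m) m
    have h2 := sum_range_succ' (fun i => (n + i) / m) m
    have h3 : (n + m) / m = n / m + 1 := Nat.add_div_right n hm
    simp only [Nat.add_zero, ← add_assoc, add_right_comm n _ 1] at h2
    omega

theorem exists_strictMono_sum_eq (m n : ℕ) (hm : 0 < m) :
    ∃ t : Fin m → ℕ, StrictMono t ∧ ∑ i, t i = n + ∑ i : Fin m, (i : ℕ) ∧
      ∀ i, t i < m + (n + m) / m := by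
  refine ⟨fun i => i + (n + i) / m, fun i j hij => ?_, ?_, fun i => ?_⟩
  · exact add_lt_add_of_lt_of_le hij (Nat.div_le_div_right (by simpa using hij.le))
  · rw [sum_add_distrib, Fin.sum_univ_eq_sum_range (fun i => (n + i) / m),
      Nat.sum_range_add_div m n hm, add_comm]
  · exact add_lt_add_of_lt_of_le i.isLt (Nat.div_le_div_right (by omega))

theorem Nat.Prime.sqrt_lt_real_sqrt {p : ℕ} (hp : p.Prime) : (Nat.sqrt p : ℝ) < √p :=
  Real.nat_sqrt_le_real_sqrt.lt_of_ne (hp.irrational_sqrt.ne_nat _).symm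

theorem sqrt_star_eq_univ :
    ∃ p₀ : ℕ, ∀ p : ℕ, p₀ ≤ p → p.Prime → ∀ A : Finset (ZMod p),
      2 * Real.sqrt p + 1 ≤ (A.card : ℝ) →
      ∀ y : ZMod p, ∃ B ⊆ A, B.card = Nat.sqrt p ∧ B.sum id = y := by
  refine ⟨0, fun p _ hp A hA y => ?_⟩
  have : Fact p.Prime := ⟨hp⟩
  set s := Nat.sqrt p
  have hs : 0 < s := Nat.sqrt_pos.mpr hp.pos
  have hsA : 2 * s + 1 < #A := by
    exact_mod_cast (by linarith [hp.sqrt_lt_real_sqrt] : (2 * s + 1 : ℝ) < #A)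
  obtain ⟨t, ht, hsum, htlt⟩ := exists_strictMono_sum_eq s (p - 1) hs
  have htA : ∀ i, t i < #A := by
    have hp1 : p ≤ s * s + 2 * s := by nlinarith [Nat.lt_succ_sqrt p]
    have : (p - 1 + s) / s < s + 3 := by
      rw [Nat.div_lt_iff_lt_mul hs, show (s + 3) * s = s * s + 3 * s by ring]
      omega
    exact fun i => by have := htlt i; omega
  have hsp : (s : ZMod p) ≠ 0 := by
    rw [Ne, ZMod.natCast_eq_zero_iff]
    exact fun h => (Nat.sqrt_lt_self hp.one_lt).not_ge (Nat.le_of_dvd hs h)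
  obtain ⟨x, hxA, hx, hxy⟩ :=
    ZMod.exists_injective_sum_eq hsp (fun _ => A) t ht.injective htA hsum y
  refine ⟨univ.image x, image_subset_iff.mpr fun i _ => hxA i, ?_, ?_⟩
  · rw [card_image_of_injective _ hx, card_univ, Fintype.card_fin]
  · rw [sum_image fun i _ j _ h => hx h]
    exact hxy
end

section
/- Let p be a sufficiently large prime and A ⊆ F_p with |A| ≥ 0.51p. Then for every integer m with 2 ≤ m ≤ |A| − 2, we have m*A = F_p. -/
/-!
Split `A` into an arbitrary `m`-element set `B` and its complement `C = A \ B`. By the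
Erdős–Heilbronn theorem, proved here with Alon's Combinatorial Nullstellensatz, the sets `B ∔ B`
and `C ∔ C` of sums of two distinct elements have at least `min p (2|B| - 3)` and
`min p (2|C| - 3)` elements. Since `2|A| ≥ p + 7`, these sizes add up to more than `p`, so every
`t ∈ 𝔽_p` is a difference `(c₁ + c₂) - (b₁ + b₂)`; exchanging `b₁, b₂` for `c₁, c₂` in `B` moves
its sum by `t` and keeps its size.
-/

open Finset MvPolynomial
open scoped Pointwise

namespace Finset

variable {α : Type*} [DecidableEq α]

def restrictedSumset [Add α] (s : Finset α) : Finset α :=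
  s.offDiag.image fun x => x.1 + x.2

theorem mem_restrictedSumset [Add α] {s : Finset α} {a : α} :
    a ∈ restrictedSumset s ↔ ∃ x ∈ s, ∃ y ∈ s, x ≠ y ∧ x + y = a := by
  simp [restrictedSumset, and_assoc]

theorem restrictedSumset_mono [Add α] {s t : Finset α} (h : s ⊆ t) :
    restrictedSumset s ⊆ restrictedSumset t :=
  image_subset_image (offDiag_mono h)

theorem mem_sub_of_card_lt_card_add_card [AddGroup α] [Fintype α] {s t : Finset α}
    (h : Fintype.card α < #s + #t) (a : α) : a ∈ s - t := by
  obtain ⟨x, hx⟩ := inter_nonempty_of_card_lt_card_add_card (subset_univ s)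
    (subset_univ (a +ᵥ t)) (by rwa [card_univ, card_vadd_finset])
  obtain ⟨hxs, hxt⟩ := mem_inter.mp hx
  obtain ⟨y, hyt, rfl⟩ := mem_vadd_finset.mp hxt
  exact mem_sub.mpr ⟨_, hxs, y, hyt, add_sub_cancel_right a y⟩

theorem exists_subset_card_eq_sum_eq_add [AddCommGroup α] {A B : Finset α} (hBA : B ⊆ A)
    {t : α} (ht : t ∈ restrictedSumset (A \ B) - restrictedSumset B) :
    ∃ B' ⊆ A, #B' = #B ∧ ∑ x ∈ B', x = ∑ x ∈ B, x + t := by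
  obtain ⟨_, hsc, _, hsb, rfl⟩ := mem_sub.mp ht
  obtain ⟨c₁, hc₁, c₂, hc₂, hc, rfl⟩ := mem_restrictedSumset.mp hsc
  obtain ⟨b₁, hb₁, b₂, hb₂, hb, rfl⟩ := mem_restrictedSumset.mp hsb
  have hbB : {b₁, b₂} ⊆ B := insert_subset hb₁ (singleton_subset_iff.mpr hb₂)
  have hcA : {c₁, c₂} ⊆ A \ B := insert_subset hc₁ (singleton_subset_iff.mpr hc₂)
  have hdisj : Disjoint (B \ {b₁, b₂}) {c₁, c₂} :=
    (disjoint_sdiff (s := B) (t := A)).mono sdiff_subset hcA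
  refine ⟨B \ {b₁, b₂} ∪ {c₁, c₂},
    union_subset (sdiff_subset.trans hBA) (hcA.trans sdiff_subset), ?_, ?_⟩
  · have h2B : 2 ≤ #B := card_pair hb ▸ card_le_card hbB
    rw [card_union_of_disjoint hdisj, card_sdiff_of_subset hbB, card_pair hb, card_pair hc]
    omega
  · rw [sum_union hdisj, ← sum_sdiff hbB, sum_pair hb, sum_pair hc]
    abel

end Finset

section

variable {σ R : Type*} [CommRing R]

theorem mul_prod_sub_C_eq_sum [DecidableEq R] (u v : MvPolynomial σ R) (T : Finset R) :
    v * ∏ t ∈ T, (u - C t) = ∑ U ∈ T.powerset, C (∏ t ∈ T \ U, -t) * (v * u ^ #U) := by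
  simp_rw [sub_eq_add_neg, ← C_neg, prod_add, mul_sum, prod_const, ← map_prod]
  exact sum_congr rfl fun _ _ => by ring

theorem coeff_mul_prod_sub_C {u v : MvPolynomial σ R} (hu : u.IsHomogeneous 1)
    (hv : v.IsHomogeneous 1) (T : Finset R) {d : σ →₀ ℕ} (hd : d.degree = #T + 1) :
    coeff d (v * ∏ t ∈ T, (u - C t)) = coeff d (v * u ^ #T) := by
  classical
  rw [mul_prod_sub_C_eq_sum, coeff_sum, sum_eq_single_of_mem T (mem_powerset_self T)]
  · simp
  · intro U hU hUT
    have hlt : #U < #T := card_lt_card (ssubset_of_subset_of_ne (mem_powerset.mp hU) hUT)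
    rw [coeff_C_mul, (hv.mul (hu.pow #U)).coeff_eq_zero (by omega), mul_zero]

theorem totalDegree_mul_prod_sub_C_le {u v : MvPolynomial σ R} (hu : u.IsHomogeneous 1)
    (hv : v.IsHomogeneous 1) (T : Finset R) :
    (v * ∏ t ∈ T, (u - C t)).totalDegree ≤ #T + 1 := by
  have hfac : ∀ t ∈ T, (u - C t).totalDegree ≤ 1 :=
    fun t _ => (totalDegree_sub_C_le u t).trans hu.totalDegree_le
  calc (v * ∏ t ∈ T, (u - C t)).totalDegree
      ≤ v.totalDegree + ∑ t ∈ T, (u - C t).totalDegree :=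
        (totalDegree_mul _ _).trans (Nat.add_le_add_left (totalDegree_finsetProd _ _) _)
    _ ≤ 1 + #T • 1 := Nat.add_le_add hv.totalDegree_le (sum_le_card_nsmul T _ 1 hfac)
    _ = #T + 1 := by rw [smul_eq_mul, mul_one, add_comm]

end

theorem coeff_X_pow_mul_X_pow {R : Type*} [CommSemiring R] (i k i' k' : ℕ) :
    coeff (Finsupp.single 0 i + Finsupp.single 1 k)
      (X 0 ^ i' * X 1 ^ k' : MvPolynomial (Fin 2) R) = if i' = i ∧ k' = k then 1 else 0 := by
  classical
  rw [X_pow_eq_monomial, X_pow_eq_monomial, monomial_mul, one_mul, coeff_monomial]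
  simp [Finsupp.ext_iff, Fin.forall_fin_two]

theorem coeff_X_sub_X_mul_X_add_X_pow {R : Type*} [CommRing R] (a b : ℕ) :
    coeff (Finsupp.single 0 (a + 1) + Finsupp.single 1 b)
      ((X 0 - X 1) * (X 0 + X 1) ^ (a + b) : MvPolynomial (Fin 2) R) =
      (a + b).choose a - (a + b).choose (a + 1) := by
  set n := a + b with hn
  have hterm : ∀ j,
      (X 0 - X 1) * (X 0 ^ j * X 1 ^ (n - j) * (n.choose j : MvPolynomial (Fin 2) R)) =
      C (n.choose j : R) * (X 0 ^ (j + 1) * X 1 ^ (n - j)) -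
        C (n.choose j : R) * (X 0 ^ j * X 1 ^ (n - j + 1)) := by
    intro j; rw [map_natCast]; ring
  have hfirst : ∀ j ∈ range (n + 1), (j + 1 = a + 1 ∧ n - j = b) ↔ j = a := by
    intro j hj; rw [mem_range] at hj; omega
  have hsecond : ∀ j ∈ range (n + 1), (j = a + 1 ∧ n - j + 1 = b) ↔ j = a + 1 := by
    intro j hj; rw [mem_range] at hj; omega
  simp only [add_pow, mul_sum, hterm, coeff_sum, coeff_sub, coeff_C_mul, coeff_X_pow_mul_X_pow,
    sum_sub_distrib, mul_ite, mul_one, mul_zero]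
  rw [sum_congr rfl fun j hj => if_congr (hfirst j hj) rfl rfl,
    sum_congr rfl fun j hj => if_congr (hsecond j hj) rfl rfl, sum_ite_eq', sum_ite_eq',
    if_pos (mem_range.mpr (show a < n + 1 by omega))]
  by_cases h : a + 1 ∈ range (n + 1)
  · rw [if_pos h]
  · rw [if_neg h, Nat.choose_eq_zero_of_lt (show n < a + 1 by rw [mem_range] at h; omega),
      Nat.cast_zero]

theorem ZMod.choose_sub_choose_succ_ne_zero {p : ℕ} [hp : Fact p.Prime] {m : ℕ}
    (hm : 2 * m < p) : ((2 * m).choose m : ZMod p) - (2 * m).choose (m + 1) ≠ 0 := by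
  have hpascal := Nat.choose_succ_right_eq (2 * m) m
  rw [show 2 * m - m = m by omega] at hpascal
  have hcentral : ((m + 1 : ℕ) : ZMod p) *
      (((2 * m).choose m : ZMod p) - (2 * m).choose (m + 1)) = (2 * m).choose m := by
    have := congrArg (Nat.cast : ℕ → ZMod p) hpascal
    push_cast at this ⊢
    linear_combination -this
  intro h
  rw [h, mul_zero, eq_comm, ZMod.natCast_eq_zero_iff] at hcentral
  have := hp.out.factorization_pos_of_dvd (Nat.choose_pos (by omega)).ne' hcentral
  rw [Nat.factorization_choose_eq_zero_of_lt hm] at this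
  exact this.false

/-- If `s ∔ s ⊆ T` with `#s = m + 2` and `#T = 2m`, then `(x - y) ∏_{t ∈ T} (x + y - t)` vanishes
on `s × s`, although its coefficient at `x^(m+1) y^m` is `C(2m, m) - C(2m, m+1) ≠ 0`. -/
theorem ZMod.two_mul_card_sub_three_le_card_restrictedSumset {p : ℕ} [Fact p.Prime]
    (s : Finset (ZMod p)) (hs : 2 * #s ≤ p + 3) : 2 * #s - 3 ≤ #(restrictedSumset s) := by
  by_contra! hlt
  obtain ⟨m, hm⟩ : ∃ m, #s = m + 2 := ⟨#s - 2, by omega⟩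
  obtain ⟨T, hsT, hT⟩ := exists_superset_card_eq (s := restrictedSumset s) (n := 2 * m)
    (by omega) (by rw [ZMod.card]; omega)
  set f : MvPolynomial (Fin 2) (ZMod p) := (X 0 - X 1) * ∏ t ∈ T, (X 0 + X 1 - C t)
  set d : Fin 2 →₀ ℕ := Finsupp.single 0 (m + 1) + Finsupp.single 1 m
  have hu : (X 0 + X 1 : MvPolynomial (Fin 2) (ZMod p)).IsHomogeneous 1 :=
    (isHomogeneous_X _ 0).add (isHomogeneous_X _ 1)
  have hv : (X 0 - X 1 : MvPolynomial (Fin 2) (ZMod p)).IsHomogeneous 1 :=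
    (isHomogeneous_X _ 0).sub (isHomogeneous_X _ 1)
  have hd : d.degree = #T + 1 := by
    simp only [d, map_add, Finsupp.degree_single, hT]
    omega
  have hcoeff : coeff d f ≠ 0 := by
    rw [coeff_mul_prod_sub_C hu hv T hd, hT, two_mul, coeff_X_sub_X_mul_X_add_X_pow, ← two_mul]
    exact ZMod.choose_sub_choose_succ_ne_zero (by omega)
  have hdeg : f.totalDegree = d.degree :=
    le_antisymm (hd ▸ totalDegree_mul_prod_sub_C_le hu hv T)
      (le_totalDegree (mem_support_iff.mpr hcoeff))
  have hds : ∀ i, d i < #s := Fin.forall_fin_two.mpr ⟨by simp [d, hm], by simp [d, hm]⟩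
  obtain ⟨x, hx, hfx⟩ :=
    combinatorial_nullstellensatz_exists_eval_nonzero f d hcoeff hdeg (fun _ => s) hds
  simp only [f, map_mul, map_sub, map_prod, map_add, eval_X, eval_C, ne_eq, mul_eq_zero,
    sub_eq_zero, prod_eq_zero_iff, not_or, not_exists, not_and] at hfx
  exact hfx.2 _ (hsT (mem_restrictedSumset.mpr ⟨_, hx 0, _, hx 1, hfx.1, rfl⟩)) rfl

theorem ZMod.min_le_card_restrictedSumset {p : ℕ} [hp : Fact p.Prime] (s : Finset (ZMod p)) :
    min p (2 * #s - 3) ≤ #(restrictedSumset s) := by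
  by_cases hs : 2 * #s ≤ p + 3
  · exact (min_le_right _ _).trans (two_mul_card_sub_three_le_card_restrictedSumset s hs)
  have hsp : #s ≤ p := by simpa using card_le_univ s
  have hodd : p % 2 = 1 := Nat.odd_iff.mp (hp.out.odd_of_ne_two (by omega))
  obtain ⟨t, hts, ht⟩ := exists_subset_card_eq (show (p + 3) / 2 ≤ #s by omega)
  calc min p (2 * #s - 3) ≤ 2 * #t - 3 := by omega
    _ ≤ #(restrictedSumset t) := two_mul_card_sub_three_le_card_restrictedSumset t (by omega)
    _ ≤ #(restrictedSumset s) := card_le_card (restrictedSumset_mono hts)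

theorem mStar_eq_univ_of_dense :
    ∃ p₀ : ℕ, ∀ p : ℕ, p₀ ≤ p → p.Prime → ∀ A : Finset (ZMod p),
      (0.51 : ℝ) * p ≤ (A.card : ℝ) →
      ∀ m : ℕ, 2 ≤ m → m + 2 ≤ A.card →
      ∀ y : ZMod p, ∃ B ⊆ A, B.card = m ∧ B.sum id = y := by
  refine ⟨350, fun p hp₀ hp A hA m hm hmA y => ?_⟩
  have : Fact p.Prime := ⟨hp⟩
  have hdense : p + 7 ≤ 2 * #A := by
    have : (350 : ℝ) ≤ p := by exact_mod_cast hp₀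
    exact_mod_cast (show (p : ℝ) + 7 ≤ 2 * #A by linarith)
  obtain ⟨B, hBA, hB⟩ := exists_subset_card_eq (show m ≤ #A by omega)
  have hsumC := ZMod.min_le_card_restrictedSumset (A \ B)
  have hsumB := ZMod.min_le_card_restrictedSumset B
  rw [card_sdiff_of_subset hBA] at hsumC
  obtain ⟨B', hB'A, hB'card, hB'sum⟩ := exists_subset_card_eq_sum_eq_add hBA
    (mem_sub_of_card_lt_card_add_card (by rw [ZMod.card]; omega) (y - ∑ x ∈ B, x))
  exact ⟨B', hB'A, hB'card.trans hB, by simpa using hB'sum⟩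
end

section
/- Let p be a prime and d a positive integer. Any multiset of d(p−1)+1 elements of F_p^d has a nonempty submultiset summing to zero (i.e., no multiset of d(p−1)+1 elements of F_p^d is zero-sum-free). -/
/-!
Chevalley–Warning, applied to the `d` polynomials `∑ i, a i j * X i ^ (q - 1)` of degree `q - 1`
in `n > d (q - 1)` variables, gives them a common zero `x ≠ 0`. Since `t ^ (q - 1) = 1` for
`t ≠ 0`, the coordinates where `x` does not vanish index a nonempty zero sum of the `a i`.
-/

open MvPolynomial Finset

namespace FiniteField

theorem totalDegree_sum_C_mul_X_pow_le {R ι : Type*} [CommSemiring R] [Fintype ι]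
    (c : ι → R) (n : ℕ) : (∑ i, C (c i) * X i ^ n : MvPolynomial ι R).totalDegree ≤ n := by
  refine (totalDegree_finsetSum _ _).trans (Finset.sup_le fun i _ => ?_)
  rw [C_mul_X_pow_eq_monomial]
  exact (totalDegree_monomial_le _ _).trans (by simp)

variable {K ι σ : Type*} [Field K] [Fintype K] [Fintype ι] [Fintype σ]

theorem eval_sum_C_mul_X_pow_card_sub_one [DecidableEq K] (c : ι → K) (x : ι → K) :
    eval x (∑ i, C (c i) * X i ^ (Fintype.card K - 1)) = ∑ i with x i ≠ 0, c i := by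
  rw [sum_filter]
  simp only [map_sum, map_mul, eval_C, map_pow, eval_X]
  refine sum_congr rfl fun i _ => ?_
  split_ifs with hi
  · rw [pow_card_sub_one_eq_one _ hi, mul_one]
  · rw [not_not.mp hi, zero_pow (Nat.sub_pos_of_lt Fintype.one_lt_card).ne', mul_zero]

theorem exists_nonempty_sum_eq_zero_of_card_lt (a : ι → σ → K)
    (h : Fintype.card σ * (Fintype.card K - 1) < Fintype.card ι) :
    ∃ s : Finset ι, s.Nonempty ∧ ∑ i ∈ s, a i = 0 := by
  classical
  set f : σ → MvPolynomial ι K := fun j => ∑ i, C (a i j) * X i ^ (Fintype.card K - 1)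
  have hdeg : ∑ j, (f j).totalDegree < Fintype.card ι :=
    calc ∑ j, (f j).totalDegree ≤ ∑ _j : σ, (Fintype.card K - 1) :=
          sum_le_sum fun j _ => totalDegree_sum_C_mul_X_pow_le _ _
      _ < Fintype.card ι := by rwa [sum_const, card_univ, smul_eq_mul]
  have hzero : ∀ j, eval 0 (f j) = 0 := fun j => by
    simp only [f, eval_sum_C_mul_X_pow_card_sub_one]
    simp
  have hdvd := char_dvd_card_solutions_of_fintype_sum_lt (ringChar K) hdeg
  have hcard : 1 < Fintype.card { x : ι → K // ∀ j, eval x (f j) = 0 } :=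
    (CharP.char_is_prime K (ringChar K)).one_lt.trans_le <|
      Nat.le_of_dvd (Fintype.card_pos_iff.mpr ⟨⟨0, hzero⟩⟩) hdvd
  obtain ⟨⟨x, hx⟩, hne⟩ := Fintype.exists_ne_of_one_lt_card hcard ⟨0, hzero⟩
  obtain ⟨i, hi⟩ := Function.ne_iff.mp fun h => hne (Subtype.ext h)
  refine ⟨univ.filter (x · ≠ 0), ⟨i, by simpa using hi⟩, funext fun j => ?_⟩
  rw [Finset.sum_apply, ← eval_sum_C_mul_X_pow_card_sub_one]
  exact hx j

theorem exists_le_ne_zero_sum_eq_zero_of_card_lt (A : Multiset (σ → K))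
    (h : Fintype.card σ * (Fintype.card K - 1) < Multiset.card A) :
    ∃ B ≤ A, B ≠ 0 ∧ B.sum = 0 := by
  classical
  obtain ⟨s, hs, hsum⟩ := exists_nonempty_sum_eq_zero_of_card_lt (fun x : A => (x : σ → K))
    (by rwa [Multiset.card_coe])
  refine ⟨s.val.map (fun x : A => (x : σ → K)), ?_, by simpa using hs.ne_empty, hsum⟩
  conv_rhs => rw [← Multiset.map_univ_coe A]
  exact Multiset.map_le_map (val_le_iff.mpr (subset_univ s))

end FiniteField

theorem davenport_constant_general {p d : ℕ} (hp : p.Prime)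
    (A : Multiset (Fin d → ZMod p)) (hA : Multiset.card A = d * (p - 1) + 1) :
    ∃ B ≤ A, B ≠ 0 ∧ B.sum = 0 := by
  have : Fact p.Prime := ⟨hp⟩
  refine FiniteField.exists_le_ne_zero_sum_eq_zero_of_card_lt A ?_
  simp [hA]

theorem davenport_constant {p d : ℕ} (hp : p.Prime) (hd : 0 < d)
    (A : Multiset (Fin d → ZMod p)) (hA : Multiset.card A = d * (p - 1) + 1) :
    ∃ B ≤ A, B ≠ 0 ∧ B.sum = 0 :=
  davenport_constant_general hp A hA
end

section
/- Let p be a prime and let A be a sequence (multiset) of p nonzero elements of F_p. Then A is complete: every element of F_p can be written as a sum of elements of some nonempty submultiset of A. -/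
/-!
`subsetSums A` collects the sums of all submultisets of `A`, the empty one included, so unlike
`S_A` it always contains `0`. Adjoining `a` to `A` turns it into `{0, a} + subsetSums A`, so by
Cauchy–Davenport each nonzero `a` enlarges it by at least one element until it is all of `F_p`;
hence `p - 1` nonzero elements already give every element. Writing `A = a ::ₘ A'`, every `y` is
`a + (y - a)` with `y - a ∈ subsetSums A'`, a sum over a nonempty submultiset of `A`.
-/
open scoped Pointwise

namespace Multiset

variable {G : Type*} [AddCommMonoid G] [DecidableEq G]

def subsetSums (A : Multiset G) : Finset G := (A.powerset.map sum).toFinset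

theorem mem_subsetSums {A : Multiset G} {y : G} : y ∈ subsetSums A ↔ ∃ B ≤ A, B.sum = y := by
  simp [subsetSums]

theorem zero_mem_subsetSums (A : Multiset G) : 0 ∈ subsetSums A :=
  mem_subsetSums.mpr ⟨0, zero_le A, sum_zero⟩

theorem subsetSums_cons (a : G) (A : Multiset G) :
    subsetSums (a ::ₘ A) = {0, a} + subsetSums A := by
  ext y
  simp only [mem_subsetSums, Finset.mem_add, Finset.mem_insert, Finset.mem_singleton]
  constructor
  · rintro ⟨B, hB, rfl⟩
    by_cases haB : a ∈ B
    · obtain ⟨B', rfl⟩ := exists_cons_of_mem haB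
      exact ⟨a, Or.inr rfl, B'.sum, ⟨B', (cons_le_cons_iff a).mp hB, rfl⟩, (sum_cons a B').symm⟩
    · exact ⟨0, Or.inl rfl, B.sum, ⟨B, (le_cons_of_notMem haB).mp hB, rfl⟩, zero_add _⟩
  · rintro ⟨x, hx | hx, z, ⟨B, hB, rfl⟩, rfl⟩ <;> subst hx
    · exact ⟨B, hB.trans (le_cons_self A a), (zero_add _).symm⟩
    · exact ⟨x ::ₘ B, cons_le_cons x hB, sum_cons x B⟩

end Multiset

open Multiset

theorem ZMod.min_le_card_subsetSums {p : ℕ} [Fact p.Prime] {A : Multiset (ZMod p)}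
    (hA : ∀ x ∈ A, x ≠ 0) : min p (A.card + 1) ≤ (subsetSums A).card := by
  induction A using Multiset.induction_on with
  | empty => simp [subsetSums]
  | cons a A ih =>
    have ha : a ≠ 0 := hA a (mem_cons_self a A)
    have ih := ih fun x hx => hA x (mem_cons_of_mem hx)
    have hpair : ({0, a} : Finset (ZMod p)).card = 2 := Finset.card_pair ha.symm
    have hcd := ZMod.cauchy_davenport Fact.out (Finset.insert_nonempty 0 {a})
      ⟨0, zero_mem_subsetSums A⟩
    rw [subsetSums_cons, card_cons]
    omega

theorem ZMod.subsetSums_eq_univ {p : ℕ} [Fact p.Prime] {A : Multiset (ZMod p)}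
    (hA : ∀ x ∈ A, x ≠ 0) (hcard : p - 1 ≤ A.card) : subsetSums A = Finset.univ := by
  have hmin := ZMod.min_le_card_subsetSums hA
  have hle := Finset.card_le_univ (subsetSums A)
  rw [ZMod.card] at hle
  exact Finset.eq_univ_of_card _ (by rw [ZMod.card]; omega)

theorem complete_of_nonzero {p : ℕ} (hp : p.Prime) (A : Multiset (ZMod p))
    (hcard : Multiset.card A = p) (hnz : ∀ x ∈ A, x ≠ 0) :
    ∀ y : ZMod p, ∃ B ≤ A, B ≠ 0 ∧ B.sum = y := by
  have : Fact p.Prime := ⟨hp⟩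
  intro y
  obtain ⟨a, ha⟩ := card_pos_iff_exists_mem.mp (hcard ▸ hp.pos)
  obtain ⟨A', rfl⟩ := exists_cons_of_mem ha
  have hA' : ∀ x ∈ A', x ≠ 0 := fun x hx => hnz x (mem_cons_of_mem hx)
  have hcard' : p - 1 ≤ A'.card := by rw [card_cons] at hcard; omega
  obtain ⟨B, hB, hBsum⟩ := mem_subsetSums.mp
    (ZMod.subsetSums_eq_univ hA' hcard' ▸ Finset.mem_univ (y - a))
  exact ⟨a ::ₘ B, cons_le_cons a hB, cons_ne_zero, by rw [sum_cons, hBsum, add_sub_cancel]⟩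
end

section
/- For each d ≥ 1 there exists p₀ such that for all primes p ≥ p₀ the following holds: for every positive integer s ≤ p and every choice of s affine bases A₁, ..., A_s of F_p^d, the sumset A₁ + ⋯ + A_s has cardinality at least (s/(8d))^d. -/
/-!
After a linear change of coordinates and a translation, an affine basis of `𝔽_p^d` becomes
`{0, e₁, …, e_d}`, so for every direction `j` the sumset `X + A` contains `X` together with the
points `x + e_j ∉ X`. Every line parallel to `e_j` that meets `X` without lying in `X` contains
such a point, so the projection of `X` along `e_j` has at most `|X|/p + (|X + A| - |X|)` points,
and the Loomis–Whitney inequality `|X|^(d-1) ≤ ∏ⱼ |πⱼ X|` turns this into a lower bound for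
`|X + A| - |X|`. As long as `|X| < (p/2)^d`, adding one more affine basis to a set of size at
least `y^d` thus adds at least `y^(d-1)/2` points, which is enough to move from `(s/(8d))^d` to
`((s+1)/(8d))^d`; once `|X| ≥ (p/2)^d` the bound holds anyway because `s ≤ p`.
-/

open Finset Function Pointwise Module MeasureTheory
open scoped ENNReal

namespace ENNReal

theorem sum_prod_rpow_inv_card_le {ι κ : Type*} (s : Finset κ) {J : Finset ι} (hJ : J.Nonempty)
    (f : ι → κ → ℝ≥0∞) :
    ∑ c ∈ s, ∏ j ∈ J, f j c ^ (#J : ℝ)⁻¹ ≤ ∏ j ∈ J, (∑ c ∈ s, f j c) ^ (#J : ℝ)⁻¹ := by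
  let _ : MeasurableSpace κ := ⊤
  have := lintegral_prod_norm_pow_le (μ := Measure.count.restrict (s : Set κ)) J (f := f)
    (fun _ _ => Measurable.of_discrete.aemeasurable) (p := fun _ => (#J : ℝ)⁻¹)
    (by simp [hJ.card_ne_zero]) (fun _ _ => by positivity)
  simpa [lintegral_finset] using this

theorem sum_pow_card_le_mul_prod_sum {ι κ : Type*} (s : Finset κ) {J : Finset ι} (hJ : J.Nonempty)
    (u : κ → ℝ≥0∞) (P : ℝ≥0∞) (Q : ι → κ → ℝ≥0∞) (h : ∀ c ∈ s, u c ^ #J ≤ P * ∏ j ∈ J, Q j c) :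
    (∑ c ∈ s, u c) ^ #J ≤ P * ∏ j ∈ J, ∑ c ∈ s, Q j c := by
  set r : ℝ := (#J : ℝ)⁻¹
  have hr : 0 < r := by positivity
  have hroot : ∀ a : ℝ≥0∞, (a ^ #J) ^ r = a := fun a => by
    rw [← rpow_natCast, ← rpow_mul, mul_inv_cancel₀ (by simp [hJ.card_ne_zero]), rpow_one]
  rw [← rpow_le_rpow_iff hr, hroot]
  calc ∑ c ∈ s, u c ≤ ∑ c ∈ s, P ^ r * ∏ j ∈ J, Q j c ^ r := by
        gcongr with c hc
        rw [← hroot (u c), prod_rpow_of_nonneg hr.le, ← mul_rpow_of_nonneg _ _ hr.le]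
        exact rpow_le_rpow (h c hc) hr.le
    _ ≤ P ^ r * ∏ j ∈ J, (∑ c ∈ s, Q j c) ^ r := by
        rw [← mul_sum]; gcongr; exact sum_prod_rpow_inv_card_le s hJ Q
    _ = (P * ∏ j ∈ J, ∑ c ∈ s, Q j c) ^ r := by
        rw [mul_rpow_of_nonneg _ _ hr.le, prod_rpow_of_nonneg hr.le]

end ENNReal

namespace Finset

variable {ι γ : Type*} [Fintype ι] [DecidableEq ι] [DecidableEq γ] [Zero γ]

theorem loomis_whitney {J : Finset ι} (hJ : J.Nonempty) {X : Finset (ι → γ)} (hX : X.Nonempty)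
    (hXJ : ∀ x ∈ X, ∀ y ∈ X, ∀ i ∉ J, x i = y i) :
    #X ^ (#J - 1) ≤ ∏ j ∈ J, #(X.image (update · j 0)) := by
  induction hJ using Finset.Nonempty.cons_induction generalizing X with
  | singleton a => simpa using hX.card_pos
  | cons a J haJ hJ ih =>
    rw [card_cons, Nat.add_sub_cancel, prod_cons]
    set slice : γ → Finset (ι → γ) := fun c => X.filter (· a = c)
    have hslice_proj : ∀ c, #(slice c) ≤ #(X.image (update · a 0)) := fun c => by
      refine card_le_card_of_injOn _ (fun x hx => mem_image_of_mem _ (mem_filter.1 hx).1) ?_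
      intro x hx y hy hxy
      funext i
      rcases eq_or_ne i a with rfl | hia
      · rw [(mem_filter.1 hx).2, (mem_filter.1 hy).2]
      · simpa [hia] using congrFun hxy i
    have hslice_lw : ∀ c ∈ X.image (· a),
        #(slice c) ^ (#J - 1) ≤ ∏ j ∈ J, #((slice c).image (update · j 0)) := by
      intro c hc
      obtain ⟨x, hx, rfl⟩ := mem_image.1 hc
      refine ih ⟨x, mem_filter.2 ⟨hx, rfl⟩⟩ fun y hy z hz i hi => ?_
      rcases eq_or_ne i a with rfl | hia
      · rw [(mem_filter.1 hy).2, (mem_filter.1 hz).2]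
      · exact hXJ y (mem_filter.1 hy).1 z (mem_filter.1 hz).1 i (by simp [hia, hi])
    have hslices_proj : ∀ j ∈ J, ∑ c ∈ X.image (· a), #((slice c).image (update · j 0)) ≤
        #(X.image (update · j 0)) := fun j hj => by
      have hja : a ≠ j := fun h => haJ (h ▸ hj)
      rw [← card_biUnion]
      · exact card_le_card (biUnion_subset.2 fun c _ => image_subset_image (filter_subset _ _))
      · intro c _ c' _ hcc'
        refine disjoint_left.2 ?_
        simp only [mem_image, mem_filter, slice]
        rintro _ ⟨x, ⟨-, rfl⟩, rfl⟩ ⟨y, ⟨-, rfl⟩, hyx⟩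
        exact hcc' (by simpa [hja] using (congrFun hyx a).symm)
    have hholder := ENNReal.sum_pow_card_le_mul_prod_sum (X.image (· a)) hJ (fun c => #(slice c))
      #(X.image (update · a 0)) (fun j c => #((slice c).image (update · j 0))) fun c hc => by
        rw [← Nat.sub_add_cancel hJ.card_pos, pow_succ']
        exact_mod_cast Nat.mul_le_mul (hslice_proj c) (hslice_lw c hc)
    rw [← Nat.cast_sum, ← card_eq_sum_card_image] at hholder
    have hcast : ((#X ^ #J : ℕ) : ENNReal) ≤
        (#(X.image (update · a 0)) * ∏ j ∈ J, #(X.image (update · j 0)) : ℕ) := by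
      push_cast
      refine hholder.trans (mul_le_mul_right (prod_le_prod' fun j hj => ?_) _)
      exact_mod_cast hslices_proj j hj
    exact Nat.cast_le.1 hcast

end Finset

section UnitSimplex

variable (ι R : Type*) [DecidableEq ι] [Fintype ι] [Zero R] [One R] [DecidableEq R]

def unitSimplex : Finset (ι → R) :=
  insert 0 (univ.image fun j => Pi.single j 1)

variable {ι R}

theorem zero_mem_unitSimplex : (0 : ι → R) ∈ unitSimplex ι R :=
  mem_insert_self _ _

theorem single_mem_unitSimplex (j : ι) : Pi.single j (1 : R) ∈ unitSimplex ι R :=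
  mem_insert_of_mem (mem_image_of_mem _ (mem_univ j))

end UnitSimplex

theorem ZMod.exists_mem_add_one_notMem {n : ℕ} [NeZero n] {S : Finset (ZMod n)}
    (hS : S.Nonempty) (hSn : #S < n) : ∃ c ∈ S, c + 1 ∉ S := by
  by_contra! hclosed
  obtain ⟨c, hc⟩ := hS
  have hadd : ∀ m : ℕ, c + m ∈ S := fun m => by
    induction m with
    | zero => simpa using hc
    | succ m ih => simpa [add_assoc] using hclosed _ ih
  have : S = univ := eq_univ_of_forall fun x => by
    simpa using hadd (x - c).val
  simp [this] at hSn

section Lines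

variable {ι : Type*} [Fintype ι] [DecidableEq ι] {n : ℕ} [NeZero n]

theorem card_mul_card_image_update_le (X : Finset (ι → ZMod n)) (j : ι) :
    n * #(X.image (update · j 0)) ≤ #X + n * #(X.image (· + Pi.single j 1) \ X) := by
  set π : (ι → ZMod n) → (ι → ZMod n) := (update · j 0)
  set fiber : (ι → ZMod n) → Finset (ι → ZMod n) := fun z => X.filter (π · = z)
  have hπ_add : ∀ x, π (x + Pi.single j 1) = π x := fun x => by
    funext i; rcases eq_or_ne i j with rfl | hij <;> simp [π, *]
  have hnotFull : ∀ z ∈ X.image π, #(fiber z) < n →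
      z ∈ (X.image (· + Pi.single j 1) \ X).image π := by
    intro z hz hlt
    obtain ⟨x₀, hx₀, rfl⟩ := mem_image.1 hz
    have hx₀fib : x₀ ∈ fiber (π x₀) := mem_filter.2 ⟨hx₀, rfl⟩
    have hne : ((fiber (π x₀)).image (· j)).Nonempty := ⟨x₀ j, mem_image_of_mem (· j) hx₀fib⟩
    have hlt' : #((fiber (π x₀)).image (· j)) < n := card_image_le.trans_lt hlt
    obtain ⟨c, hc, hc1⟩ := ZMod.exists_mem_add_one_notMem hne hlt'
    obtain ⟨x, hx, rfl⟩ := mem_image.1 hc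
    obtain ⟨hxX, hxz⟩ := mem_filter.1 hx
    have hπx : π (x + Pi.single j 1) = π x₀ := (hπ_add x).trans hxz
    have hnotMem : x + Pi.single j 1 ∉ X := fun hX =>
      hc1 (mem_image.2 ⟨x + Pi.single j 1, mem_filter.2 ⟨hX, hπx⟩, by simp⟩)
    exact mem_image.2 ⟨_, mem_sdiff.2 ⟨mem_image_of_mem _ hxX, hnotMem⟩, hπx⟩
  set notFull := (X.image π).filter (fun z => #(fiber z) < n)
  set full := (X.image π).filter (fun z => ¬ #(fiber z) < n)
  have hfull : n * #full ≤ #X := by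
    calc n * #full = ∑ _z ∈ full, n := by rw [sum_const, smul_eq_mul, mul_comm]
      _ ≤ ∑ z ∈ full, #(fiber z) := sum_le_sum fun z hz => not_lt.1 (mem_filter.1 hz).2
      _ ≤ ∑ z ∈ X.image π, #(fiber z) := sum_le_sum_of_subset (filter_subset _ _)
      _ = #X := (card_eq_sum_card_image π X).symm
  have hpart : #notFull ≤ #(X.image (· + Pi.single j 1) \ X) :=
    (card_le_card fun z hz => hnotFull z (mem_filter.1 hz).1 (mem_filter.1 hz).2).trans
      card_image_le
  calc n * #(X.image π) = n * #full + n * #notFull := by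
        rw [← mul_add, add_comm, card_filter_add_card_filter_not]
    _ ≤ _ := by gcongr

theorem card_pow_le_card_add_unitSimplex {X : Finset (ι → ZMod n)} (hX : X.Nonempty) :
    (#X : ℝ) ^ (Fintype.card ι - 1) ≤
      (#X / n + (#(X + unitSimplex ι (ZMod n)) - #X)) ^ Fintype.card ι := by
  rcases isEmpty_or_nonempty ι with _ | _
  · simp
  have hboundary : ∀ j, #(X.image (· + Pi.single j 1) \ X) + #X ≤ #(X + unitSimplex ι (ZMod n)) :=
    fun j => by
      rw [card_sdiff_add_card]
      refine card_le_card (union_subset ?_ ?_)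
      · exact image_subset_iff.2 fun x hx => add_mem_add hx (single_mem_unitSimplex j)
      · exact fun x hx => by simpa using add_mem_add hx zero_mem_unitSimplex
  have hproj : ∀ j,
      (#(X.image (update · j 0)) : ℝ) ≤ #X / n + (#(X + unitSimplex ι (ZMod n)) - #X) :=
    fun j => by
      have h1 : (n : ℝ) * #(X.image (update · j 0)) ≤
          #X + n * #(X.image (· + Pi.single j 1) \ X) := by
        exact_mod_cast card_mul_card_image_update_le X j
      have h2 : (#(X.image (· + Pi.single j 1) \ X) : ℝ) + #X ≤
          #(X + unitSimplex ι (ZMod n)) := by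
        exact_mod_cast hboundary j
      have hn : (0 : ℝ) < n := by exact_mod_cast NeZero.pos n
      rw [div_add' _ _ _ hn.ne', le_div_iff₀ hn]
      nlinarith
  calc (#X : ℝ) ^ (Fintype.card ι - 1) ≤ ∏ j, (#(X.image (update · j 0)) : ℝ) := by
        exact_mod_cast loomis_whitney univ_nonempty hX (by simp)
    _ ≤ ∏ _j : ι, (#X / n + (#(X + unitSimplex ι (ZMod n)) - #X) : ℝ) :=
        prod_le_prod (fun _ _ => by positivity) fun j _ => hproj j
    _ = _ := by rw [prod_const, card_univ]

end Lines

theorem AffineBasis.add_equivFun_symm_mem_range {ι K V : Type*} [Fintype ι] [DecidableEq ι]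
    [Ring K] [DecidableEq K] [AddCommGroup V] [Module K V] (b : AffineBasis ι K V) (i : ι)
    {s : {j // j ≠ i} → K}
    (hs : s ∈ unitSimplex {j // j ≠ i} K) : b i + (b.basisOf i).equivFun.symm s ∈ Set.range b := by
  rcases mem_insert.1 hs with rfl | hs
  · simp
  · obtain ⟨j, -, rfl⟩ := mem_image.1 hs
    simp [AffineBasis.basisOf_apply]

theorem card_pow_finrank_sub_one_le {n : ℕ} [Fact (1 < n)] {V : Type*} [AddCommGroup V]
    [Module (ZMod n) V] [DecidableEq V] {A X : Finset V}
    (hA : AffineIndependent (ZMod n) ((↑) : A → V)) (hAspan : affineSpan (ZMod n) (A : Set V) = ⊤)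
    (hX : X.Nonempty) :
    (#X : ℝ) ^ (finrank (ZMod n) V - 1) ≤ (#X / n + (#(X + A) - #X)) ^ finrank (ZMod n) V := by
  let b : AffineBasis A (ZMod n) V := ⟨(↑), hA, by simpa using hAspan⟩
  obtain ⟨a₀⟩ := b.nonempty
  let e := (b.basisOf a₀).equivFun
  have hcard : #(X.image e) = #X := card_image_of_injective _ e.injective
  have hle : #(X.image e + unitSimplex _ (ZMod n)) ≤ #(X + A) := by
    rw [← card_image_of_injective _ ((add_right_injective (a₀ : V)).comp e.symm.injective)]
    refine card_le_card (image_subset_iff.2 fun v hv => ?_)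
    obtain ⟨y, hy, s, hs, rfl⟩ := mem_add.1 hv
    obtain ⟨x, hx, rfl⟩ := mem_image.1 hy
    obtain ⟨a, ha⟩ := b.add_equivFun_symm_mem_range a₀ hs
    have hv : (a₀ : V) + e.symm (e x + s) = x + a := by
      change _ = x + b a
      rw [map_add, e.symm_apply_apply, ha]
      change _ = x + (a₀ + _)
      abel
    rw [comp_apply, hv]
    exact add_mem_add hx a.2
  have hpos : (0 : ℝ) ≤
      #(X.image e) / n + (#(X.image e + unitSimplex _ (ZMod n)) - #(X.image e)) := by
    have hmono := card_le_card_add_right (s := X.image e) ⟨0, zero_mem_unitSimplex⟩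
    exact add_nonneg (by positivity) (sub_nonneg.2 (by exact_mod_cast hmono))
  rw [finrank_eq_card_basis (b.basisOf a₀)]
  calc (#X : ℝ) ^ _ = (#(X.image e) : ℝ) ^ _ := by rw [hcard]
    _ ≤ _ := card_pow_le_card_add_unitSimplex (hX.image e)
    _ ≤ _ := by rw [hcard] at hpos ⊢; gcongr

theorem pow_sub_one_div_two_le {d : ℕ} (hd : 1 ≤ d) {p y N w : ℝ} (hp : 0 < p) (hy : 0 ≤ y)
    (hN : y ^ d ≤ N) (hsmall : 2 ^ d * N ≤ p ^ d) (hw : 0 ≤ w)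
    (hiso : N ^ (d - 1) ≤ (N / p + w) ^ d) : y ^ (d - 1) / 2 ≤ w := by
  obtain ⟨k, rfl⟩ : ∃ k, d = k + 1 := ⟨d - 1, by omega⟩
  rw [Nat.add_sub_cancel] at hiso ⊢
  by_contra! hw'
  have hN0 : 0 ≤ N := (pow_nonneg hy _).trans hN
  obtain ⟨z, hz, hzN⟩ : ∃ z, N / p + w < z ∧ z ^ (k + 1) ≤ N ^ k := by
    rcases le_total (2 * (N / p)) (y ^ k) with h | h
    · refine ⟨y ^ k, by linarith, ?_⟩
      rw [← pow_mul, mul_comm, pow_mul]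
      exact pow_le_pow_left₀ (by positivity) hN k
    · refine ⟨2 * (N / p), by linarith, ?_⟩
      calc (2 * (N / p)) ^ (k + 1) = 2 ^ (k + 1) * N / p ^ (k + 1) * N ^ k := by
            rw [mul_div_assoc', div_pow, mul_pow, pow_succ N]
            ring
        _ ≤ 1 * N ^ k := by
            gcongr; rwa [div_le_one (by positivity)]
        _ = N ^ k := one_mul _
  exact (pow_lt_pow_left₀ hz (by positivity) k.succ_ne_zero).not_ge (hzN.trans hiso)

open Real in
theorem add_one_div_eight_mul_pow_le {d : ℕ} (hd : 1 ≤ d) {y : ℝ} (hy : 1 ≤ y) :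
    (y + 1 / (8 * d)) ^ d ≤ y ^ d + y ^ (d - 1) / 2 := by
  have hd0 : (0 : ℝ) < d := by exact_mod_cast hd
  have hy0 : 0 < y := by linarith
  have hexp : (1 + 1 / (8 * d * y)) ^ d ≤ exp (1 / (8 * y)) := by
    calc (1 + 1 / (8 * d * y)) ^ d ≤ exp (1 / (8 * d * y)) ^ d :=
          pow_le_pow_left₀ (by positivity) (by linarith [add_one_le_exp (1 / (8 * d * y))]) d
      _ = exp (1 / (8 * y)) := by rw [← exp_nat_mul]; congr 1; field_simp
  have hexp_le : exp (1 / (8 * y)) ≤ 1 + 1 / (2 * y) := by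
    calc exp (1 / (8 * y)) ≤ 1 / (1 - 1 / (8 * y)) :=
          exp_bound_div_one_sub_of_interval (by positivity) (by rw [div_lt_one] <;> linarith)
      _ ≤ 1 + 1 / (2 * y) := by
          rw [div_le_iff₀ (by rw [sub_pos, div_lt_one] <;> linarith)]
          field_simp
          nlinarith
  calc (y + 1 / (8 * d)) ^ d = y ^ d * (1 + 1 / (8 * d * y)) ^ d := by
        rw [← mul_pow]; congr 1; field_simp
    _ ≤ y ^ d * (1 + 1 / (2 * y)) := by gcongr; exact hexp.trans hexp_le
    _ = y ^ d + y ^ (d - 1) / 2 := by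
        obtain ⟨k, rfl⟩ : ∃ k, d = k + 1 := ⟨d - 1, by omega⟩
        rw [Nat.add_sub_cancel]; field_simp; ring

theorem succ_div_pow_le_of_isoperimetric {d s : ℕ} (hd : 1 ≤ d) {p : ℕ} (hsp : s + 1 ≤ p)
    {N M : ℝ} (hN : ((s : ℝ) / (8 * d)) ^ d ≤ N) (hM : 1 ≤ M) (hNM : N ≤ M)
    (hiso : N ^ (d - 1) ≤ (N / p + (M - N)) ^ d) : (((s + 1 : ℕ) : ℝ) / (8 * d)) ^ d ≤ M := by
  have hd0 : (0 : ℝ) < d := by exact_mod_cast hd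
  have hd1 : (1 : ℝ) ≤ d := by exact_mod_cast hd
  by_cases hs : s + 1 ≤ 8 * d
  · refine le_trans (pow_le_one₀ (by positivity) ?_) hM
    rw [div_le_one (by positivity)]
    exact_mod_cast hs
  have hy : 1 ≤ (s : ℝ) / (8 * d) := by
    rw [le_div_iff₀ (by positivity), one_mul]
    exact_mod_cast (by omega : 8 * d ≤ s)
  have hsucc : ((s + 1 : ℕ) : ℝ) / (8 * d) = s / (8 * d) + 1 / (8 * d) := by
    push_cast; rw [add_div]
  by_cases hbig : (p : ℝ) ^ d ≤ 2 ^ d * N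
  · calc (((s + 1 : ℕ) : ℝ) / (8 * d)) ^ d ≤ ((p : ℝ) / 2) ^ d := by
          gcongr
          linarith
      _ ≤ N := by rw [div_pow, div_le_iff₀ (by positivity)]; linarith
      _ ≤ M := hNM
  · have hp : (0 : ℝ) < p := by exact_mod_cast (by omega : 0 < p)
    rw [hsucc]
    calc (s / (8 * d) + 1 / (8 * d) : ℝ) ^ d
        ≤ (s / (8 * d)) ^ d + (s / (8 * d) : ℝ) ^ (d - 1) / 2 :=
          add_one_div_eight_mul_pow_le hd hy
      _ ≤ N + (M - N) := add_le_add hN (pow_sub_one_div_two_le hd hp (by positivity) hN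
          (not_le.1 hbig).le (sub_nonneg.2 hNM) hiso)
      _ = M := by ring

theorem div_pow_le_card_sum_of_affineBasis {n : ℕ} [Fact (1 < n)] {V : Type*} [AddCommGroup V]
    [Module (ZMod n) V] [DecidableEq V] {d : ℕ} (hd : 1 ≤ d) (hV : finrank (ZMod n) V = d)
    {s : ℕ} (hsn : s ≤ n) (A : Fin s → Finset V)
    (hA : ∀ i, AffineIndependent (ZMod n) ((↑) : A i → V) ∧ affineSpan (ZMod n) (A i : Set V) = ⊤) :
    ((s : ℝ) / (8 * d)) ^ d ≤ #(∑ i, A i) := by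
  induction s with
  | zero => simp [zero_pow (by omega : d ≠ 0)]
  | succ s ih =>
    have hne : ∀ i, (A i).Nonempty := fun i => by
      rw [nonempty_iff_ne_empty]
      rintro h
      simpa [h] using (hA i).2
    set X := ∑ i : Fin s, A i.castSucc
    have hX : X.Nonempty := by
      choose a ha using hne
      refine ⟨∑ i : Fin s, a i.castSucc, ?_⟩
      rw [← mem_coe, coe_sum]
      exact Set.finsetSum_mem_finsetSum _ _ _ fun i _ => ha _
    have hXA : #X ≤ #(X + A (Fin.last s)) := card_le_card_add_right (hne _)
    rw [Fin.sum_univ_castSucc]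
    refine succ_div_pow_le_of_isoperimetric hd hsn (ih (by omega) _ fun i => hA _) ?_
      (by exact_mod_cast hXA) ?_
    · exact_mod_cast hX.card_pos.trans_le hXA
    · have hiso := card_pow_finrank_sub_one_le (hA (Fin.last s)).1 (hA (Fin.last s)).2 hX
      rwa [hV] at hiso

theorem sumset_of_affine_bases (d : ℕ) (hd : 1 ≤ d) :
    ∃ p₀ : ℕ, ∀ p : ℕ, p₀ ≤ p → p.Prime →
      ∀ s : ℕ, 1 ≤ s → s ≤ p →
      ∀ A : Fin s → Finset (Fin d → ZMod p),
        (∀ i, (A i).card = d + 1 ∧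
          AffineIndependent (ZMod p) (fun x : (A i : Finset (Fin d → ZMod p)) => (x : Fin d → ZMod p))) →
        ((s : ℝ) / (8 * d)) ^ d ≤ ((∑ i, A i).card : ℝ) := by
  refine ⟨0, fun p _ hp s _ hsp A hA => ?_⟩
  have := Fact.mk hp
  refine div_pow_le_card_sum_of_affineBasis hd (finrank_fin_fun _) hsp A fun i => ⟨(hA i).2, ?_⟩
  simpa using (hA i).2.affineSpan_eq_top_iff_card_eq_finrank_add_one.2
    (by rw [Fintype.card_coe, (hA i).1, finrank_fin_fun])
end

section
/- Let W ≥ 1 be a real number, let p be a prime, and let A be a multiset in F_p^d such that no affine hyperplane of F_p^d contains more than |A|/(4W) elements of A (counted with multiplicity). Then for every subset Y of F_p^d with |Y| ≤ p^d/2 and every a' ∈ A, there exists a ∈ A with |(a + Y) \ (a' + Y)| ≥ (W/(16p))|Y|. -/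
/-!
Translate `A` by `-a'`, which preserves the hyperplane condition, and write
`∂ z = #((z + Y) \ Y)`, which is subadditive in `z`. For `K = ⌈p / W⌉` estimate the energy
`E = ∑_{a ∈ A} ∑_{j, l < K} #(Y ∩ ((j - l) a + Y))` in two ways.

Subadditivity gives `E ≥ K² |A| |Y| - 2 K³ ∑_a ∂ a`. On the Fourier side
`p^d E = ∑_χ |Ŷ χ|² ∑_a |∑_{j<K} χ (j a)|²`, and the trivial character contributes
`K² |A| |Y|²`. For `χ ≠ 0` the inner sum depends on `a` only through the character
`t ↦ χ (t a)` of `ZMod p`. Each fibre of that assignment lies in a fibre of `χ`, and hence in an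
affine hyperplane, because `ker χ` is a proper subspace. The hyperplane condition and Parseval on
`ZMod p` then bound the sum over `a` by `|A| p K / (4W) ≤ K² |A| / 4`. Parseval on `F_p^d`
finishes: when `|Y| ≤ p^d / 2` the average of `∂ a` over `A` is at least `3 |Y| / (16 K)`.
-/

open Finset Pointwise

namespace Finset

variable {G : Type*} [AddCommGroup G] [DecidableEq G]

def shiftBoundary (Y : Finset G) (z : G) : ℕ := #((z +ᵥ Y) \ Y)

variable (Y : Finset G)

lemma card_vadd_sdiff_vadd (a b : G) : #((a +ᵥ Y) \ (b +ᵥ Y)) = Y.shiftBoundary (a - b) := by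
  rw [shiftBoundary, ← card_vadd_finset b (((a - b) +ᵥ Y) \ Y), vadd_finset_sdiff, vadd_vadd,
    add_sub_cancel]

lemma card_inter_vadd_add_shiftBoundary (z : G) :
    #(Y ∩ (z +ᵥ Y)) + Y.shiftBoundary z = #Y := by
  rw [shiftBoundary, inter_comm, card_inter_add_card_sdiff, card_vadd_finset]

lemma shiftBoundary_neg (z : G) : Y.shiftBoundary (-z) = Y.shiftBoundary z := by
  have h := card_vadd_sdiff_vadd Y 0 z
  rw [zero_sub, zero_vadd] at h
  have := card_sdiff_add_card_inter Y (z +ᵥ Y)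
  have := card_inter_vadd_add_shiftBoundary Y z
  omega

lemma shiftBoundary_add_le (z w : G) :
    Y.shiftBoundary (z + w) ≤ Y.shiftBoundary z + Y.shiftBoundary w := by
  calc Y.shiftBoundary (z + w)
      ≤ #(((z + w) +ᵥ Y) \ (w +ᵥ Y)) + #((w +ᵥ Y) \ Y) :=
        (card_le_card (sdiff_triangle _ _ _)).trans (card_union_le _ _)
    _ = Y.shiftBoundary z + Y.shiftBoundary w := by
        rw [card_vadd_sdiff_vadd, add_sub_cancel_right]; rfl

lemma shiftBoundary_sub_le (z w : G) :
    Y.shiftBoundary (z - w) ≤ Y.shiftBoundary z + Y.shiftBoundary w := by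
  simpa [sub_eq_add_neg, shiftBoundary_neg] using Y.shiftBoundary_add_le z (-w)

lemma shiftBoundary_nsmul_le (n : ℕ) (z : G) :
    Y.shiftBoundary (n • z) ≤ n * Y.shiftBoundary z := by
  induction n with
  | zero => simp [shiftBoundary]
  | succ n ih =>
    rw [succ_nsmul, add_mul, one_mul]
    exact (Y.shiftBoundary_add_le _ _).trans (by omega)

lemma filter_sub_mem_eq_inter_vadd (z : G) : {y ∈ Y | y - z ∈ Y} = Y ∩ (z +ᵥ Y) := by
  ext y
  simp only [mem_filter, mem_inter, mem_vadd_finset, vadd_eq_add]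
  exact and_congr_right fun _ => ⟨fun h => ⟨_, h, add_sub_cancel z y⟩,
    by rintro ⟨x, hx, rfl⟩; simpa using hx⟩

/-- Equals `∑ x, #{j < K | x - j • a ∈ Y} ^ 2`, the energy of `Y` along `0, a, …, (K - 1) • a`. -/
def progressionEnergy (K : ℕ) (a : G) : ℕ :=
  ∑ j ∈ range K, ∑ l ∈ range K, #(Y ∩ ((j • a - l • a) +ᵥ Y))

lemma sq_mul_card_le_progressionEnergy_add (K : ℕ) (a : G) :
    K ^ 2 * #Y ≤ Y.progressionEnergy K a + 2 * K ^ 3 * Y.shiftBoundary a := by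
  have hterm : ∀ j ∈ range K, ∀ l ∈ range K,
      #Y ≤ #(Y ∩ ((j • a - l • a) +ᵥ Y)) + 2 * K * Y.shiftBoundary a := by
    intro j hj l hl
    have hjl : Y.shiftBoundary (j • a - l • a) ≤ 2 * K * Y.shiftBoundary a :=
      calc Y.shiftBoundary (j • a - l • a)
          ≤ j * Y.shiftBoundary a + l * Y.shiftBoundary a :=
            (Y.shiftBoundary_sub_le _ _).trans
              (add_le_add (Y.shiftBoundary_nsmul_le j a) (Y.shiftBoundary_nsmul_le l a))
        _ ≤ K * Y.shiftBoundary a + K * Y.shiftBoundary a := by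
            gcongr
            exacts [(mem_range.1 hj).le, (mem_range.1 hl).le]
        _ = 2 * K * Y.shiftBoundary a := by ring
    have := Y.card_inter_vadd_add_shiftBoundary (j • a - l • a)
    omega
  calc K ^ 2 * #Y = ∑ _j ∈ range K, ∑ _l ∈ range K, #Y := by simp [sq, mul_assoc]
    _ ≤ ∑ j ∈ range K, ∑ l ∈ range K,
          (#(Y ∩ ((j • a - l • a) +ᵥ Y)) + 2 * K * Y.shiftBoundary a) :=
        sum_le_sum fun j hj => sum_le_sum fun l hl => hterm j hj l hl
    _ = Y.progressionEnergy K a + 2 * K ^ 3 * Y.shiftBoundary a := by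
        simp only [progressionEnergy, sum_add_distrib, sum_const, card_range, smul_eq_mul]
        ring

end Finset

lemma Multiset.sum_map_comp_le_mul_sum {α β : Type*} [Fintype β] [DecidableEq β]
    (B : Multiset α) (Φ : α → β) {g : β → ℝ} (hg : ∀ b, 0 ≤ g b) {C : ℝ}
    (hC : ∀ b, ((B.filter (Φ · = b)).card : ℝ) ≤ C) :
    (B.map fun a => g (Φ a)).sum ≤ C * ∑ b, g b := by
  have hcount (b : β) : (B.map Φ).count b = (B.filter (Φ · = b)).card := by
    rw [Multiset.count_map]
    exact congrArg _ (Multiset.filter_congr fun _ _ => eq_comm)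
  calc (B.map fun a => g (Φ a)).sum = ((B.map Φ).map g).sum := by rw [Multiset.map_map]; rfl
    _ = ∑ b, ((B.filter (Φ · = b)).card : ℝ) * g b := by
        rw [sum_multiset_map_count, sum_subset (subset_univ _) fun b _ hb => ?_]
        · simp_rw [hcount, nsmul_eq_mul]
        · rw [Multiset.count_eq_zero.2 (Multiset.mem_toFinset.not.1 hb), zero_smul]
    _ ≤ ∑ b, C * g b := sum_le_sum fun b _ => mul_le_mul_of_nonneg_right (hC b) (hg b)
    _ = C * ∑ b, g b := (mul_sum _ _ _).symm

namespace AddChar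

lemma sq_norm_sum_apply {G ι : Type*} [AddCommGroup G] [Finite G] (χ : AddChar G ℂ)
    (I : Finset ι) (u : ι → G) :
    (‖∑ i ∈ I, χ (u i)‖ : ℂ) ^ 2 = ∑ i ∈ I, ∑ i' ∈ I, χ (u i - u i') := by
  simp_rw [← Complex.mul_conj', map_sum, sum_mul_sum, ← map_neg_eq_conj, ← map_add_eq_mul,
    sub_eq_add_neg]

variable {G : Type*} [AddCommGroup G] [Fintype G] [DecidableEq G]

lemma sum_sq_norm_sum_mul_apply (Y : Finset G) (z : G) :
    ∑ χ : AddChar G ℂ, (‖∑ y ∈ Y, χ y‖ : ℂ) ^ 2 * χ z = Fintype.card G * #(Y ∩ (z +ᵥ Y)) := by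
  calc ∑ χ : AddChar G ℂ, (‖∑ y ∈ Y, χ y‖ : ℂ) ^ 2 * χ z
      = ∑ y' ∈ Y, ∑ y ∈ Y, ∑ χ : AddChar G ℂ, χ (y - y' + z) := by
        have h (χ : AddChar G ℂ) := χ.sq_norm_sum_apply Y id
        simp only [id] at h
        simp_rw [h, sum_mul, ← map_add_eq_mul]
        rw [sum_comm]
        exact (sum_congr rfl fun _ _ => sum_comm).trans sum_comm
    _ = ∑ y' ∈ Y, ∑ y ∈ Y, if y = y' - z then (Fintype.card G : ℂ) else 0 := by
        simp_rw [sum_apply_eq_ite, sub_add_eq_add_sub, sub_eq_zero, ← eq_sub_iff_add_eq]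
    _ = Fintype.card G * #(Y ∩ (z +ᵥ Y)) := by
        rw [← filter_sub_mem_eq_inter_vadd, card_filter, Nat.cast_sum, mul_sum]
        simp [sum_ite_eq']

lemma sum_sq_norm_sum (Y : Finset G) :
    ∑ χ : AddChar G ℂ, ‖∑ y ∈ Y, χ y‖ ^ 2 = Fintype.card G * #Y := by
  have h := sum_sq_norm_sum_mul_apply Y 0
  simp only [map_zero_eq_one, mul_one, zero_vadd, inter_self] at h
  exact_mod_cast h

lemma card_mul_sum_card_inter_vadd {ι : Type*} (Y : Finset G) (I : Finset ι) (u : ι → G) :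
    (Fintype.card G : ℝ) * ∑ i ∈ I, ∑ i' ∈ I, #(Y ∩ ((u i - u i') +ᵥ Y))
      = ∑ χ : AddChar G ℂ, ‖∑ y ∈ Y, χ y‖ ^ 2 * ‖∑ i ∈ I, χ (u i)‖ ^ 2 := by
  apply Complex.ofReal_injective
  push_cast
  simp_rw [sq_norm_sum_apply _ I u, mul_sum, ← sum_sq_norm_sum_mul_apply]
  symm
  rw [sum_comm]
  exact sum_congr rfl fun _ _ => sum_comm

end AddChar

def HyperplaneBounded (K : Type*) {V : Type*} [Ring K] [DecidableEq K] [AddCommGroup V]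
    [Module K V] (A : Multiset V) (C : ℝ) : Prop :=
  ∀ (f : V →ₗ[K] K) (c : K), f ≠ 0 → ((A.filter (fun x => f x = c)).card : ℝ) ≤ C

lemma HyperplaneBounded.map_sub {K V : Type*} [Ring K] [DecidableEq K] [AddCommGroup V]
    [Module K V] {A : Multiset V} {C : ℝ} (hA : HyperplaneBounded K A C) (a' : V) :
    HyperplaneBounded K (A.map (· - a')) C := by
  intro f c hf
  rw [Multiset.filter_map, Multiset.card_map]
  simpa [Function.comp_def, sub_eq_iff_eq_add] using hA f (c + f a') hf

variable {p : ℕ} [Fact p.Prime] {V : Type*} [AddCommGroup V] [Module (ZMod p) V]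

lemma AddChar.exists_linearMap_ne_zero_apply_eq_of_apply_eq {χ : AddChar V ℂ} (hχ : χ ≠ 0) :
    ∃ f : V →ₗ[ZMod p] ZMod p, f ≠ 0 ∧ ∀ a b, χ a = χ b → f a = f b := by
  let U := AddSubgroup.toZModSubmodule p χ.toAddMonoidHom.ker
  have hU (x : V) : x ∈ U ↔ χ x = 1 := by
    simp [U, AddSubgroup.mem_toZModSubmodule, AddMonoidHom.mem_ker]
  obtain ⟨x, hx⟩ := AddChar.ne_zero_iff.1 hχ
  obtain ⟨f, hf, hUf⟩ := U.exists_le_ker_of_lt_top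
    (lt_top_iff_ne_top.2 fun h => hx ((hU x).1 (h ▸ Submodule.mem_top)))
  refine ⟨f, hf, fun a b hab => sub_eq_zero.1 ?_⟩
  rw [← map_sub]
  exact hUf ((hU _).2 (by rw [AddChar.map_sub_eq_div, hab, div_self (χ.val_isUnit b).ne_zero]))

namespace HyperplaneBounded

lemma card_filter_apply_eq_le {B : Multiset V} {C : ℝ} (hB : HyperplaneBounded (ZMod p) B C)
    {χ : AddChar V ℂ} (hχ : χ ≠ 0) (ω : ℂ) : ((B.filter (χ · = ω)).card : ℝ) ≤ C := by
  obtain ⟨f, hf, hχf⟩ := AddChar.exists_linearMap_ne_zero_apply_eq_of_apply_eq (p := p) hχ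
  obtain h | ⟨a₀, ha₀⟩ := (B.filter (χ · = ω)).empty_or_exists_mem
  · simpa [h] using (Nat.cast_nonneg _).trans (hB f 0 hf)
  · refine le_trans ?_ (hB f (f a₀) hf)
    gcongr
    exact Multiset.monotone_filter_right B fun a ha =>
      hχf a a₀ (ha.trans (Multiset.of_mem_filter ha₀).symm)

lemma sum_sq_norm_sum_apply_nsmul_le {B : Multiset V} {C : ℝ}
    (hB : HyperplaneBounded (ZMod p) B C) {χ : AddChar V ℂ} (hχ : χ ≠ 0) {K : ℕ} (hK : K ≤ p) :
    (B.map fun a => ‖∑ j ∈ range K, χ (j • a)‖ ^ 2).sum ≤ C * (p * K) := by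
  classical
  let Φ (a : V) : AddChar (ZMod p) ℂ :=
    χ.compAddMonoidHom (LinearMap.toSpanSingleton (ZMod p) V a).toAddMonoidHom
  let S : Finset (ZMod p) := (range K).image Nat.cast
  have hS : Set.InjOn (Nat.cast : ℕ → ZMod p) (range K) := fun j hj l hl hjl => by
    rw [← ZMod.val_cast_of_lt ((mem_range.1 hj).trans_le hK), hjl,
      ZMod.val_cast_of_lt ((mem_range.1 hl).trans_le hK)]
  have hΦ (a : V) : ∑ j ∈ range K, χ (j • a) = ∑ s ∈ S, Φ a s := by
    simp [S, Φ, sum_image hS, Nat.cast_smul_eq_nsmul]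
  have hfiber (φ : AddChar (ZMod p) ℂ) : ((B.filter (Φ · = φ)).card : ℝ) ≤ C := by
    refine le_trans ?_ (hB.card_filter_apply_eq_le hχ (φ 1))
    gcongr
    exact Multiset.monotone_filter_right B fun a ha => by simp [← ha, Φ]
  calc (B.map fun a => ‖∑ j ∈ range K, χ (j • a)‖ ^ 2).sum
      = (B.map fun a => ‖∑ s ∈ S, Φ a s‖ ^ 2).sum := by simp_rw [hΦ]
    _ ≤ C * ∑ φ : AddChar (ZMod p) ℂ, ‖∑ s ∈ S, φ s‖ ^ 2 :=
        Multiset.sum_map_comp_le_mul_sum B Φ (g := fun φ => ‖∑ s ∈ S, φ s‖ ^ 2)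
          (fun _ => sq_nonneg _) hfiber
    _ = C * (p * K) := by
        rw [AddChar.sum_sq_norm_sum, ZMod.card, card_image_of_injOn hS, card_range]

lemma card_le [Nontrivial V] {B : Multiset V} {C : ℝ} (hB : HyperplaneBounded (ZMod p) B C) :
    (Multiset.card B : ℝ) ≤ C * p := by
  obtain ⟨f, hf, -⟩ := (⊥ : Submodule (ZMod p) V).exists_le_ker_of_lt_top bot_lt_top
  simpa using Multiset.sum_map_comp_le_mul_sum B f (g := fun _ => (1 : ℝ))
    (fun _ => zero_le_one) fun c => hB f c hf

variable [Fintype V] [DecidableEq V]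

lemma card_mul_sum_progressionEnergy_le {B : Multiset V} {W : ℝ} (hW : 0 < W)
    (hB : HyperplaneBounded (ZMod p) B (Multiset.card B / (4 * W))) (Y : Finset V) {K : ℕ}
    (hKp : K ≤ p) (hpK : p ≤ W * K) :
    (Fintype.card V : ℝ) * (B.map fun a => (Y.progressionEnergy K a : ℝ)).sum
      ≤ K ^ 2 * Multiset.card B * (Fintype.card V * #Y + 3 * #Y ^ 2) / 4 := by
  set M : ℝ := (Multiset.card B : ℝ)
  let T (χ : AddChar V ℂ) : ℝ := (B.map fun a => ‖∑ j ∈ range K, χ (j • a)‖ ^ 2).sum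
  have hT0 : T 0 = K ^ 2 * M := by simp [T, M, mul_comm]
  have hT (χ : AddChar V ℂ) (hχ : χ ≠ 0) : T χ ≤ K ^ 2 * M / 4 := by
    refine (hB.sum_sq_norm_sum_apply_nsmul_le hχ hKp).trans ?_
    rw [div_mul_eq_mul_div, div_le_div_iff₀ (by positivity) (by norm_num)]
    have := mul_le_mul_of_nonneg_left hpK (by positivity : (0 : ℝ) ≤ M * K)
    nlinarith
  have hY0 : ‖∑ y ∈ Y, (0 : AddChar V ℂ) y‖ ^ 2 = #Y ^ 2 := by simp
  let nonzero := (univ : Finset (AddChar V ℂ)).erase 0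
  calc (Fintype.card V : ℝ) * (B.map fun a => (Y.progressionEnergy K a : ℝ)).sum
      = ∑ χ : AddChar V ℂ, ‖∑ y ∈ Y, χ y‖ ^ 2 * T χ := by
        have hE (a : V) : (Fintype.card V : ℝ) * Y.progressionEnergy K a
            = ∑ χ : AddChar V ℂ, ‖∑ y ∈ Y, χ y‖ ^ 2 * ‖∑ j ∈ range K, χ (j • a)‖ ^ 2 :=
          AddChar.card_mul_sum_card_inter_vadd Y (range K) (· • a)
        rw [← Multiset.sum_map_mul_left]
        simp_rw [hE, T, ← Multiset.sum_map_mul_left]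
        exact Multiset.sum_map_sum_map _ _
    _ = #Y ^ 2 * (K ^ 2 * M) + ∑ χ ∈ nonzero, ‖∑ y ∈ Y, χ y‖ ^ 2 * T χ := by
        rw [← add_sum_erase _ _ (mem_univ 0), hT0, hY0]
    _ ≤ #Y ^ 2 * (K ^ 2 * M) + ∑ χ ∈ nonzero, ‖∑ y ∈ Y, χ y‖ ^ 2 * (K ^ 2 * M / 4) := by
        gcongr with χ hχ
        exact hT χ (ne_of_mem_erase hχ)
    _ = K ^ 2 * M * (Fintype.card V * #Y + 3 * #Y ^ 2) / 4 := by
        rw [← sum_mul, sum_erase_eq_sub (mem_univ 0), AddChar.sum_sq_norm_sum, hY0]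
        ring

lemma three_mul_le_sum_shiftBoundary {B : Multiset V} {W : ℝ} (hW : 0 < W)
    (hB : HyperplaneBounded (ZMod p) B (Multiset.card B / (4 * W))) {Y : Finset V}
    (hY : (#Y : ℝ) ≤ Fintype.card V / 2) {K : ℕ} (hK : 0 < K) (hKp : K ≤ p)
    (hpK : p ≤ W * K) :
    3 * Multiset.card B * #Y ≤ 16 * K * (B.map fun a => (Y.shiftBoundary a : ℝ)).sum := by
  set M : ℝ := (Multiset.card B : ℝ)
  set E := (B.map fun a => (Y.progressionEnergy K a : ℝ)).sum
  set D := (B.map fun a => (Y.shiftBoundary a : ℝ)).sum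
  have hlow : K ^ 2 * #Y * M ≤ E + 2 * K ^ 3 * D := by
    calc (K ^ 2 * #Y * M : ℝ) = (B.map fun _ => (K ^ 2 * #Y : ℝ)).sum := by
          simp [M, mul_comm]
      _ ≤ (B.map fun a => Y.progressionEnergy K a + 2 * K ^ 3 * (Y.shiftBoundary a : ℝ)).sum :=
          Multiset.sum_map_le_sum_map _ _ fun a _ => by
            exact_mod_cast Y.sq_mul_card_le_progressionEnergy_add K a
      _ = E + 2 * K ^ 3 * D := by rw [Multiset.sum_map_add, Multiset.sum_map_mul_left]
  have hup := hB.card_mul_sum_progressionEnergy_le hW Y hKp hpK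
  have hY2 : (#Y : ℝ) ^ 2 ≤ Fintype.card V * #Y / 2 := by nlinarith [(#Y).cast_nonneg (α := ℝ)]
  have hV : (0 : ℝ) < Fintype.card V := Nat.cast_pos.2 Fintype.card_pos
  have hKR : (0 : ℝ) < K := Nat.cast_pos.2 hK
  have : (Fintype.card V * K ^ 2 : ℝ) * (3 * M * #Y)
      ≤ (Fintype.card V * K ^ 2) * (16 * K * D) := by
    nlinarith [mul_le_mul_of_nonneg_left hlow hV.le,
      mul_le_mul_of_nonneg_left hY2 (by positivity : (0 : ℝ) ≤ K ^ 2 * M)]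
  exact le_of_mul_le_mul_left this (by positivity)

theorem exists_le_shiftBoundary {B : Multiset V} (hB0 : B ≠ 0) {W : ℝ} (hW : 1 ≤ W)
    (hB : HyperplaneBounded (ZMod p) B (Multiset.card B / (4 * W))) {Y : Finset V}
    (hY : (#Y : ℝ) ≤ Fintype.card V / 2) :
    ∃ b ∈ B, W / (16 * p) * #Y ≤ Y.shiftBoundary b := by
  obtain rfl | hYne := Y.eq_empty_or_nonempty
  · obtain ⟨b, hb⟩ := Multiset.exists_mem_of_ne_zero hB0
    exact ⟨b, hb, by simp⟩
  have hM : (0 : ℝ) < Multiset.card B := Nat.cast_pos.2 (Multiset.card_pos.2 hB0)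
  have hY0 : (0 : ℝ) < #Y := Nat.cast_pos.2 hYne.card_pos
  have hp : (0 : ℝ) < p := Nat.cast_pos.2 (Fact.out : p.Prime).pos
  have hW0 : 0 < W := by linarith
  have : Nontrivial V := Fintype.one_lt_card_iff_nontrivial.1 <| by
    have : (1 : ℝ) ≤ #Y := Nat.one_le_cast.2 hYne.card_pos
    exact_mod_cast (show (1 : ℝ) < Fintype.card V by linarith)
  have h4W : 4 * W ≤ p := by
    have := hB.card_le
    rw [div_mul_eq_mul_div, le_div_iff₀ (by positivity)] at this
    nlinarith
  set K := ⌈(p : ℝ) / W⌉₊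
  have hpK : p ≤ W * K := (div_le_iff₀' hW0).1 (Nat.le_ceil _)
  have hKp : K ≤ p := Nat.ceil_le.2 (div_le_self hp.le hW)
  have hWK : W * K < 3 * p :=
    calc W * K < W * (p / W + 1) :=
          mul_lt_mul_of_pos_left (Nat.ceil_lt_add_one (by positivity)) hW0
      _ = p + W := by field_simp
      _ ≤ 3 * p := by linarith
  have havg := hB.three_mul_le_sum_shiftBoundary hW0 hY (Nat.ceil_pos.2 (by positivity)) hKp hpK
  by_contra! hsmall
  have hD := Multiset.sum_lt_sum_of_nonempty hB0 hsmall
  rw [Multiset.map_const', Multiset.sum_replicate, nsmul_eq_mul] at hD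
  have : 3 * (Multiset.card B * #Y : ℝ) * p < (Multiset.card B * #Y : ℝ) * (W * K) :=
    calc 3 * (Multiset.card B * #Y : ℝ) * p ≤ 16 * K * _ * p := by
          rw [← mul_assoc]; exact mul_le_mul_of_nonneg_right havg hp.le
      _ < 16 * K * (Multiset.card B * (W / (16 * p) * #Y)) * p := by gcongr
      _ = (Multiset.card B * #Y : ℝ) * (W * K) := by field_simp
  linarith [mul_lt_mul_of_pos_left hWK (mul_pos hM hY0)]

end HyperplaneBounded

theorem alon_dubiner_expansion_cor {p d : ℕ} (hp : p.Prime) (W : ℝ) (hW : 1 ≤ W)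
    (A : Multiset (Fin d → ZMod p))
    (hhyp : ∀ (f : (Fin d → ZMod p) →ₗ[ZMod p] ZMod p) (c : ZMod p), f ≠ 0 →
      ((A.filter (fun x => f x = c)).card : ℝ) ≤ (Multiset.card A : ℝ) / (4 * W)) :
    ∀ Y : Finset (Fin d → ZMod p), (Y.card : ℝ) ≤ (p : ℝ) ^ d / 2 →
      ∀ a' ∈ A, ∃ a ∈ A,
        (W / (16 * p)) * (Y.card : ℝ) ≤
          (((Y.image (a + ·)) \ (Y.image (a' + ·))).card : ℝ) := by
  have : Fact p.Prime := ⟨hp⟩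
  intro Y hY a' ha'
  have hB : HyperplaneBounded (ZMod p) (A.map (· - a'))
      (Multiset.card (A.map (· - a')) / (4 * W)) := by
    rw [Multiset.card_map]
    exact HyperplaneBounded.map_sub hhyp a'
  obtain ⟨b, hb, hbY⟩ := hB.exists_le_shiftBoundary
    (fun h => by simp [Multiset.map_eq_zero.1 h] at ha') hW (by simpa using hY)
  obtain ⟨a, ha, rfl⟩ := Multiset.mem_map.1 hb
  exact ⟨a, ha, by rwa [← card_vadd_sdiff_vadd] at hbY⟩
end

section
/- Let p be a sufficiently large prime, and let A₁ ⊆ F_p² be a set of at least (1 − 3α)p points on the line {(1, y) : y ∈ F_p} (for a sufficiently small constant α > 0). Then for every l with 2 ≤ l ≤ |A₁| − 2, the set l*A₁ of sums of l distinct elements of A₁ is the whole line {(l, y) : y ∈ F_p}; hence ⋃_{2 ≤ l ≤ |A₁|−2} l*A₁ covers the strip {(x,y) ∈ F_p² : 2 ≤ x ≤ |A₁| − 2}. -/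
/-!
Write `l = 2k + r` with `r ∈ {0, 1}` and let `S ⊆ ZMod p` be the set of `y`-coordinates. For any
centre `c`, at least `2|S| - p` elements `a ∈ S` have their reflection `c - a` in `S` as well, so
when `S` is dense one can pick `k` disjoint pairs `{a, c - a}`, giving `2k` elements with sum `k c`.
Taking `c = (t - r e) / k` and adding one more element `e` when `r = 1` gives `l` elements with
sum `t`; a large `l` reduces to `|S| - l` by passing to complements. On the line `x = 1` the first
coordinate of a sum of `l` points is `l`, and the second is a sum of `l` elements of `S`.
-/

open Finset Function

theorem Finset.exists_subset_card_eq_two_mul_sum_eq_nsmul {α : Type*} [AddCommGroup α]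
    [DecidableEq α] (c : α) :
    ∀ (k : ℕ) {s : Finset α}, (∀ a ∈ s, c - a ∈ s) → (∀ a ∈ s, c - a ≠ a) →
      2 * k ≤ s.card → ∃ B ⊆ s, B.card = 2 * k ∧ B.sum id = k • c
  | 0, _, _, _, _ => ⟨∅, empty_subset _, rfl, by simp⟩
  | k + 1, s, hmaps, hfix, hk => by
    obtain ⟨a, ha⟩ : s.Nonempty := card_pos.1 (by omega)
    have hca : c - a ∈ (s.erase a) := mem_erase.2 ⟨hfix a ha, hmaps a ha⟩
    set s' := (s.erase a).erase (c - a)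
    have hs' : s'.card + 2 = s.card := by
      rw [card_erase_of_mem hca, card_erase_of_mem ha]; omega
    have hmaps' : ∀ x ∈ s', c - x ∈ s' := by
      intro x hx
      simp only [s', mem_erase] at hx ⊢
      refine ⟨fun h => hx.2.1 (sub_right_injective h), fun h => hx.1 ?_, hmaps x hx.2.2⟩
      rw [← h, sub_sub_cancel]
    obtain ⟨B, hBs', hB, hBsum⟩ := exists_subset_card_eq_two_mul_sum_eq_nsmul c k hmaps'
      (fun x hx => hfix x (mem_of_mem_erase (mem_of_mem_erase hx))) (by omega)
    have hcaB : c - a ∉ B := fun h => by simpa [s'] using hBs' h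
    have haB : a ∉ insert (c - a) B :=
      mem_insert.not.2 (not_or.2 ⟨(hfix a ha).symm, fun h => by simpa [s'] using hBs' h⟩)
    refine ⟨insert a (insert (c - a) B), ?_, ?_, ?_⟩
    · exact insert_subset ha (insert_subset (mem_of_mem_erase hca)
        (hBs'.trans ((erase_subset _ _).trans (erase_subset _ _))))
    · rw [card_insert_of_notMem haB, card_insert_of_notMem hcaB, hB]; ring
    · rw [sum_insert haB, sum_insert hcaB, hBsum, succ_nsmul, id, id]
      abel

theorem Finset.two_mul_card_le_card_inter_image_add_card {α : Type*} [Fintype α]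
    [DecidableEq α] {f : α → α} (hf : Injective f) (S : Finset α) :
    2 * S.card ≤ (S ∩ S.image f).card + Fintype.card α := by
  have := card_union_add_card_inter S (S.image f)
  have := card_le_univ (S ∪ S.image f)
  have := card_image_of_injective S hf
  omega

theorem ZMod.exists_subset_erase_card_eq_two_mul_sum_eq_nsmul {p : ℕ} [Fact p.Prime]
    {S : Finset (ZMod p)} (e c : ZMod p) {k : ℕ} (hk : 2 * k + p + 3 ≤ 2 * S.card) :
    ∃ B ⊆ S.erase e, B.card = 2 * k ∧ B.sum id = k • c := by
  have hSp : S.card ≤ p := by simpa using S.card_le_univ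
  have : NeZero (2 : ZMod p) := ⟨Ring.two_ne_zero (by rw [ZMod.ringChar_zmod_n]; omega)⟩
  -- `c / 2` is the only fixed point of `a ↦ c - a`; removing `c - e` as well as `e` keeps `G`
  -- closed under it
  set G := (S ∩ S.image (c - ·)) \ {c / 2, e, c - e}
  have hG : ∀ a, a ∈ G ↔ a ∈ S ∧ c - a ∈ S ∧ a ≠ c / 2 ∧ a ≠ e ∧ a ≠ c - e := by
    intro a
    have : a ∈ S.image (c - ·) ↔ c - a ∈ S :=
      ⟨fun h => by obtain ⟨b, hb, rfl⟩ := mem_image.1 h; rwa [sub_sub_cancel],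
        fun h => mem_image.2 ⟨c - a, h, sub_sub_cancel c a⟩⟩
    simp only [G, mem_sdiff, mem_inter, this, mem_insert, mem_singleton]
    tauto
  have hmaps : ∀ a ∈ G, c - a ∈ G := by
    intro a ha
    obtain ⟨haS, hcaS, hhalf, he, hce⟩ := (hG a).1 ha
    refine (hG _).2 ⟨hcaS, by rwa [sub_sub_cancel], ?_, ?_, ?_⟩
    · exact fun h => hhalf (by rw [← sub_half c, ← h, sub_sub_cancel])
    · exact fun h => hce (by rw [← h, sub_sub_cancel])
    · exact fun h => he (sub_right_injective h)
  have hfix : ∀ a ∈ G, c - a ≠ a := fun a ha h =>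
    ((hG a).1 ha).2.2.1 (eq_div_of_mul_eq two_ne_zero (by linear_combination -h))
  have hcard : 2 * k ≤ G.card := by
    have := two_mul_card_le_card_inter_image_add_card (sub_right_injective (b := c)) S
    have : (S ∩ S.image (c - ·)).card ≤ G.card + 3 :=
      calc _ ≤ G.card + ({c / 2, e, c - e} : Finset (ZMod p)).card :=
            card_le_card_sdiff_add_card
        _ ≤ G.card + 3 := by grw [card_le_three]
    simp only [ZMod.card] at *
    omega
  obtain ⟨B, hBG, hB⟩ := exists_subset_card_eq_two_mul_sum_eq_nsmul c k hmaps hfix hcard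
  refine ⟨B, fun b hb => ?_, hB⟩
  obtain ⟨hbS, -, -, hbe, -⟩ := (hG b).1 (hBG hb)
  exact mem_erase.2 ⟨hbe, hbS⟩

theorem ZMod.exists_subset_card_eq_sum_eq_of_add_le {p : ℕ} [Fact p.Prime]
    {S : Finset (ZMod p)} {l : ℕ} (hl : 2 ≤ l) (hS : l + p + 3 ≤ 2 * S.card) (t : ZMod p) :
    ∃ B ⊆ S, B.card = l ∧ B.sum id = t := by
  have hSp : S.card ≤ p := by simpa using S.card_le_univ
  obtain ⟨e, he⟩ : S.Nonempty := card_pos.1 (by omega)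
  have hk : ((l / 2 : ℕ) : ZMod p) ≠ 0 := by
    rw [Ne, ZMod.natCast_eq_zero_iff]
    exact fun h => by have := Nat.le_of_dvd (by omega) h; omega
  set c := (t - (l % 2) • e) / (l / 2 : ℕ)
  have hsum : (l / 2) • c + (l % 2) • e = t := by
    rw [nsmul_eq_mul, mul_div_cancel₀ _ hk, sub_add_cancel]
  obtain ⟨B, hBS, hBcard, hBsum⟩ :=
    ZMod.exists_subset_erase_card_eq_two_mul_sum_eq_nsmul (S := S) e c (k := l / 2) (by omega)
  rcases Nat.mod_two_eq_zero_or_one l with hl2 | hl2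
  · refine ⟨B, hBS.trans (erase_subset _ _), by omega, ?_⟩
    rwa [hl2, zero_smul, add_zero, ← hBsum] at hsum
  · have heB : e ∉ B := fun h => by simpa using hBS h
    refine ⟨insert e B, insert_subset he (hBS.trans (erase_subset _ _)), ?_, ?_⟩
    · rw [card_insert_of_notMem heB]; omega
    · rw [sum_insert heB, id, hBsum, add_comm, ← hsum, hl2, one_smul]

theorem ZMod.exists_subset_card_eq_sum_eq {p : ℕ} [Fact p.Prime] {S : Finset (ZMod p)}
    (hS : 2 * p + 6 ≤ 3 * S.card) {l : ℕ} (hl : 2 ≤ l) (hlS : l + 2 ≤ S.card) (t : ZMod p) :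
    ∃ B ⊆ S, B.card = l ∧ B.sum id = t := by
  have hSp : S.card ≤ p := by simpa using S.card_le_univ
  by_cases h : 2 * l ≤ S.card
  · exact exists_subset_card_eq_sum_eq_of_add_le hl (by omega) t
  · obtain ⟨B, hBS, hBcard, hBsum⟩ := exists_subset_card_eq_sum_eq_of_add_le (S := S)
      (l := S.card - l) (by omega) (by omega) (S.sum id - t)
    refine ⟨S \ B, sdiff_subset, by rw [card_sdiff_of_subset hBS]; omega, ?_⟩
    rw [sum_sdiff_eq_sub hBS, hBsum, sub_sub_cancel]

theorem Finset.exists_eq_map_sectR {α β : Type*} {A : Finset (α × β)} {a : α}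
    (hA : ∀ x ∈ A, x.1 = a) : ∃ S : Finset β, A = S.map (Embedding.sectR a β) := by
  classical
  refine ⟨A.image Prod.snd, ext fun x => ⟨fun hx => ?_, fun hx => ?_⟩⟩
  · exact mem_map.2 ⟨x.2, mem_image_of_mem _ hx, Prod.ext (hA x hx).symm rfl⟩
  · obtain ⟨y, hy, rfl⟩ := mem_map.1 hx
    obtain ⟨z, hz, rfl⟩ := mem_image.1 hy
    convert hz
    exact Prod.ext (hA z hz).symm rfl

theorem Finset.sum_map_sectR_one {R M : Type*} [AddCommMonoidWithOne R] [AddCommMonoid M]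
    (S : Finset M) : (S.map (Embedding.sectR (1 : R) M)).sum id = ((S.card : R), S.sum id) := by
  ext <;> simp [Prod.fst_sum, Prod.snd_sum]

theorem lines_and_strip :
    ∃ α : ℝ, 0 < α ∧ ∃ p₀ : ℕ, ∀ p : ℕ, p₀ ≤ p → p.Prime →
      ∀ A₁ : Finset (ZMod p × ZMod p),
        (∀ x ∈ A₁, x.1 = 1) → (1 - 3 * α) * p ≤ (A₁.card : ℝ) →
        (∀ l : ℕ, 2 ≤ l → l + 2 ≤ A₁.card →
          ∀ x : ZMod p × ZMod p,
            (∃ B ⊆ A₁, B.card = l ∧ B.sum id = x) ↔ x.1 = (l : ZMod p)) ∧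
        (∀ x : ZMod p × ZMod p, 2 ≤ x.1.val → x.1.val ≤ A₁.card - 2 →
          ∃ B ⊆ A₁, 2 ≤ B.card ∧ B.card ≤ A₁.card - 2 ∧ B.sum id = x) := by
  refine ⟨1 / 100, by norm_num, 7, fun p hp hprime A₁ hline hcard => ?_⟩
  have := Fact.mk hprime
  obtain ⟨S, rfl⟩ := exists_eq_map_sectR hline
  rw [card_map] at hcard ⊢
  have hS : 2 * p + 6 ≤ 3 * S.card := by
    have : (97 : ℝ) * p ≤ 100 * S.card := by linarith
    have : 97 * p ≤ 100 * S.card := by exact_mod_cast this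
    omega
  have hlines : ∀ l : ℕ, 2 ≤ l → l + 2 ≤ S.card → ∀ x : ZMod p × ZMod p,
      (∃ B ⊆ S.map (Embedding.sectR (1 : ZMod p) (ZMod p)), B.card = l ∧ B.sum id = x) ↔
        x.1 = (l : ZMod p) := by
    intro l hl hlS x
    simp only [subset_map_iff]
    constructor
    · rintro ⟨_, ⟨B, -, rfl⟩, rfl, rfl⟩
      rw [sum_map_sectR_one, card_map]
    · intro hx
      obtain ⟨B, hBS, rfl, hBsum⟩ := ZMod.exists_subset_card_eq_sum_eq hS hl hlS x.2
      exact ⟨_, ⟨B, hBS, rfl⟩, card_map _, by rw [sum_map_sectR_one, hBsum, ← hx]⟩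
  refine ⟨hlines, fun x hx2 hxS => ?_⟩
  obtain ⟨B, hBS, hB, hBsum⟩ :=
    (hlines x.1.val hx2 (by omega) x).2 (ZMod.natCast_zmod_val x.1).symm
  exact ⟨B, hBS, hB ▸ hx2, hB ▸ hxS, hBsum⟩
end
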